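/- arXiv:2111.01002 — 9 statements merged into one kernel-verified Lean document; each statement's English description precedes it below -/
import Mathlib

section
/- Let k, ℓ, n be integers with 1 ≤ k < ℓ ≤ n. Then the pair x_1 = (-1)^{ℓ-k+1} f_{n-ℓ}/f_{ℓ-k}, x_2 = f_{n-k}/f_{ℓ-k} is the unique solution (x_1, x_2) ∈ ℝ² of the system f_k·x_1 + f_ℓ·x_2 = f_n and f_{k-1}·x_1 + f_{ℓ-1}·x_2 = f_{n-1}. -/
open Nat in
lemma docagne (n j : ℕ) :
    (fib (n+1) : ℝ) * fib (n+j) - fib n * fib (n+j+1) = (-1:ℝ)^n * fib j := by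
  induction n with
  | zero => simp
  | succ n ih =>
    have h1 : fib (n+2) = fib n + fib (n+1) := fib_add_two
    have h2 : fib (n+1+j+1) = fib (n+j) + fib (n+j+1) := by
      have : n+1+j+1 = (n+j)+2 := by ring
      rw [this, fib_add_two]
    have h3 : (n+1)+j = (n+j)+1 := by ring
    rw [h1, h2, h3]
    push_cast
    linear_combination (-1:ℝ) * ih

open Nat in
lemma vajda (n i j : ℕ) :
    (fib (n+i) : ℝ) * fib (n+j) - fib n * fib (n+i+j) = (-1:ℝ)^n * fib i * fib j := by
  induction i using Nat.twoStepInduction with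
  | zero => simp
  | one =>
    have := docagne n j
    have h3 : n + 1 + j = n + j + 1 := by ring
    rw [h3]; linear_combination this
  | more i ih1 ih2 =>
    have h1 : fib (n+(i+2)) = fib (n+i) + fib (n+i+1) := by
      have : n+(i+2) = (n+i)+2 := by ring
      rw [this, fib_add_two]
    have h2 : fib (n+(i+2)+j) = fib (n+i+j) + fib (n+i+j+1) := by
      have : n+(i+2)+j = (n+i+j)+2 := by ring
      rw [this, fib_add_two]
    have h3 : fib (i+2) = fib i + fib (i+1) := fib_add_two
    rw [h1, h2, h3]
    rw [show n + (i+1) = n + i + 1 from by ring] at ih2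
    rw [show n + i + 1 + j = n + i + j + 1 from by ring] at ih2
    push_cast
    linear_combination ih1 + ih2

/-- Let k, ℓ, n be integers with 1 ≤ k < ℓ ≤ n. Then the pair
x₁ = (-1)^{ℓ-k+1} f_{n-ℓ}/f_{ℓ-k}, x₂ = f_{n-k}/f_{ℓ-k} is the unique solution
(x₁, x₂) ∈ ℝ² of the system f_k·x₁ + f_ℓ·x₂ = f_n and f_{k-1}·x₁ + f_{ℓ-1}·x₂ = f_{n-1}. -/
theorem stmt0 (k l n : ℕ) (hk : 1 ≤ k) (hkl : k < l) (hln : l ≤ n) :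
    ((Nat.fib k : ℝ) * ((-1 : ℝ) ^ (l - k + 1) * (Nat.fib (n - l) : ℝ) / (Nat.fib (l - k) : ℝ))
        + (Nat.fib l : ℝ) * ((Nat.fib (n - k) : ℝ) / (Nat.fib (l - k) : ℝ)) = (Nat.fib n : ℝ)
      ∧ (Nat.fib (k - 1) : ℝ) * ((-1 : ℝ) ^ (l - k + 1) * (Nat.fib (n - l) : ℝ) / (Nat.fib (l - k) : ℝ))
        + (Nat.fib (l - 1) : ℝ) * ((Nat.fib (n - k) : ℝ) / (Nat.fib (l - k) : ℝ)) = (Nat.fib (n - 1) : ℝ))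
    ∧ (∀ x₁ x₂ : ℝ,
        (Nat.fib k : ℝ) * x₁ + (Nat.fib l : ℝ) * x₂ = (Nat.fib n : ℝ) →
        (Nat.fib (k - 1) : ℝ) * x₁ + (Nat.fib (l - 1) : ℝ) * x₂ = (Nat.fib (n - 1) : ℝ) →
        x₁ = (-1 : ℝ) ^ (l - k + 1) * (Nat.fib (n - l) : ℝ) / (Nat.fib (l - k) : ℝ)
          ∧ x₂ = (Nat.fib (n - k) : ℝ) / (Nat.fib (l - k) : ℝ)) := by
  obtain ⟨c, rfl⟩ : ∃ c, k = c + 1 := ⟨k - 1, by omega⟩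
  obtain ⟨a, ha, rfl⟩ : ∃ a, 1 ≤ a ∧ l = c + 1 + a := ⟨l - (c+1), by omega, by omega⟩
  obtain ⟨b, rfl⟩ : ∃ b, n = c + 1 + a + b := ⟨n - (c+1+a), by omega⟩
  simp only [show c + 1 + a - (c + 1) = a from by omega,
    show c + 1 + a + b - (c + 1 + a) = b from by omega,
    show c + 1 + a + b - (c + 1) = a + b from by omega,
    show c + 1 - 1 = c from by omega,
    show c + 1 + a - 1 = c + a from by omega,
    show c + 1 + a + b - 1 = c + a + b from by omega]
  have hfa : (Nat.fib a : ℝ) ≠ 0 := by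
    simp only [ne_eq, Nat.cast_eq_zero, Nat.fib_eq_zero]; omega
  have V1 := vajda a (c+1) b
  rw [show a + (c+1) = c + 1 + a from by ring] at V1
  have V2 := vajda a c b
  rw [show a + c = c + a from by ring] at V2
  have V3 := vajda c 1 a
  simp only [Nat.fib_one, Nat.cast_one, mul_one] at V3
  have E1 : (Nat.fib (c+1) : ℝ) * ((-1 : ℝ) ^ (a + 1) * (Nat.fib b : ℝ) / (Nat.fib a : ℝ))
      + (Nat.fib (c+1+a) : ℝ) * ((Nat.fib (a+b) : ℝ) / (Nat.fib a : ℝ)) = (Nat.fib (c+1+a+b) : ℝ) := by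
    field_simp
    rw [pow_succ]
    linear_combination V1
  have E2 : (Nat.fib c : ℝ) * ((-1 : ℝ) ^ (a + 1) * (Nat.fib b : ℝ) / (Nat.fib a : ℝ))
      + (Nat.fib (c+a) : ℝ) * ((Nat.fib (a+b) : ℝ) / (Nat.fib a : ℝ)) = (Nat.fib (c+a+b) : ℝ) := by
    field_simp
    rw [pow_succ]
    linear_combination V2
  refine ⟨⟨E1, E2⟩, ?_⟩
  intro x₁ x₂ hx1 hx2
  set y₁ : ℝ := (-1 : ℝ) ^ (a + 1) * (Nat.fib b : ℝ) / (Nat.fib a : ℝ) with hy1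
  set y₂ : ℝ := (Nat.fib (a+b) : ℝ) / (Nat.fib a : ℝ) with hy2
  have d1 : (Nat.fib (c+1) : ℝ) * (x₁ - y₁) + (Nat.fib (c+1+a) : ℝ) * (x₂ - y₂) = 0 := by
    linear_combination hx1 - E1
  have d2 : (Nat.fib c : ℝ) * (x₁ - y₁) + (Nat.fib (c+a) : ℝ) * (x₂ - y₂) = 0 := by
    linear_combination hx2 - E2
  have hDne : ((-1 : ℝ) ^ c * (Nat.fib a : ℝ)) ≠ 0 := by
    apply mul_ne_zero _ hfa
    exact pow_ne_zero _ (by norm_num)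
  have hu1 : ((-1 : ℝ) ^ c * (Nat.fib a : ℝ)) * (x₁ - y₁) = 0 := by
    linear_combination (Nat.fib (c+a) : ℝ) * d1 - (Nat.fib (c+1+a) : ℝ) * d2 - (x₁ - y₁) * V3
  have hu2 : ((-1 : ℝ) ^ c * (Nat.fib a : ℝ)) * (x₂ - y₂) = 0 := by
    linear_combination (Nat.fib (c+1) : ℝ) * d2 - (Nat.fib c : ℝ) * d1 - (x₂ - y₂) * V3
  constructor
  · have := (mul_eq_zero.mp hu1).resolve_left hDne
    linarith [this]
  · have := (mul_eq_zero.mp hu2).resolve_left hDne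
    linarith [this]
end

section
/- Let n ≥ 1 be an integer and let L : ℝ^n → ℝ be a linear map. If there exists z ∈ ℤ^n with z ∈ F_n^+ such that L(z) = min{L(x) : x ∈ F_n^+}, then L(z) = min{L(x) : x ∈ V_n^+(ℤ)}. -/
/-- The vector y_n(k,ℓ) ∈ ℝ^n (1-indexed), with y_k = (-1)^{ℓ-k+1} f_{n-ℓ}/f_{ℓ-k},
y_ℓ = f_{n-k}/f_{ℓ-k}, and y_i = 0 otherwise. -/
noncomputable def yVec (n k l : ℕ) : Fin n → ℝ := fun i =>
  if (i : ℕ) + 1 = k then (-1 : ℝ) ^ (l - k + 1) * (Nat.fib (n - l) : ℝ) / (Nat.fib (l - k) : ℝ)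
  else if (i : ℕ) + 1 = l then (Nat.fib (n - k) : ℝ) / (Nat.fib (l - k) : ℝ)
  else 0

/-- The 2×n matrix A_n whose first row is (f_1, …, f_n) and second row is (f_0, …, f_{n-1}). -/
noncomputable def Amat (n : ℕ) : Matrix (Fin 2) (Fin n) ℝ :=
  Matrix.of fun r j => if r = 0 then (Nat.fib ((j : ℕ) + 1) : ℝ) else (Nat.fib (j : ℕ) : ℝ)

/-- V_n^+(ℝ): the set of x ∈ ℝ^n with A_n x = (f_n, f_{n-1})^T and all entries nonnegative. -/
def Vplus (n : ℕ) : Set (Fin n → ℝ) :=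
  {x | (Amat n).mulVec x = ![(Nat.fib n : ℝ), (Nat.fib (n - 1) : ℝ)] ∧ ∀ i, 0 ≤ x i}

/-- F_n^+ = {y_n(k,ℓ) : 1 ≤ k < ℓ ≤ n with ℓ − k odd}. -/
def FplusSet (n : ℕ) : Set (Fin n → ℝ) :=
  {v | ∃ k l : ℕ, 1 ≤ k ∧ k < l ∧ l ≤ n ∧ Odd (l - k) ∧ v = yVec n k l}

/-- V_n^+(ℤ): elements of V_n^+(ℝ) with all entries integers. -/
def VplusZ (n : ℕ) : Set (Fin n → ℝ) :=
  {x | x ∈ Vplus n ∧ ∀ i, ∃ m : ℤ, x i = (m : ℝ)}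

/-!
Since `z ∈ F_n^+ ⊆ V_n^+(ℝ)` is integral, it suffices to find, for every `x ∈ V_n^+(ℝ)`, some `w ∈ F_n^+`
with `L w ≤ L x`. The first row of `A_n` is positive, so a nonzero kernel vector of `A_n`
supported in the support of `x` has coordinates of both signs; moving along it in the direction
that does not increase `L` until a coordinate vanishes shrinks the support, and we reach a point
of `V_n^+(ℝ)` supported on two indices `k < ℓ`. By Vajda's identity `y_n(k,ℓ)` solves
`A_n y = (f_n, f_{n-1})`, and by d'Ocagne's identity columns `k` and `ℓ` of `A_n` are independent,
so the point is `y_n(k,ℓ)`. Nonnegativity of its `k`-th coordinate forces `ℓ - k` odd or `ℓ = n`,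
and in the latter case the point is also `y_n(n-1,n)`.
-/

open Finset Matrix

theorem exists_neg_of_sum_mul_eq_zero {ι : Type*} [Fintype ι] {w d : ι → ℝ} (hw : ∀ j, 0 < w j)
    (hsum : ∑ j, w j * d j = 0) (hd : d ≠ 0) : ∃ j, d j < 0 := by
  by_contra! h
  refine hd (funext fun j => ?_)
  have := (Finset.sum_eq_zero_iff_of_nonneg fun j _ => mul_nonneg (hw j).le (h j)).1 hsum j
  simpa [(hw j).ne'] using this

namespace Nat

theorem fib_dOcagne {R : Type*} [CommRing R] (m d : ℕ) :
    (fib (m + d) : R) * fib (d + 1) - fib (m + d + 1) * fib d = (-1) ^ d * fib m := by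
  induction d with
  | zero => simp
  | succ d ih =>
    rw [← add_assoc, fib_add_two, fib_add_two (n := m + d)]
    push_cast
    linear_combination -ih

theorem fib_vajda {R : Type*} [CommRing R] (m d a : ℕ) :
    (fib (d + m) : R) * fib (d + a) - fib d * fib (d + m + a) = (-1) ^ d * fib m * fib a := by
  induction a using Nat.twoStepInduction with
  | zero => simp [mul_comm]
  | one =>
    rw [fib_one, Nat.cast_one, mul_one, add_comm d m]
    linear_combination fib_dOcagne (R := R) m d
  | more a ih₀ ih₁ =>
    have h₁ : fib (d + (a + 2)) = fib (d + a) + fib (d + (a + 1)) := by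
      rw [← add_assoc, fib_add_two]; rfl
    have h₂ : fib (d + m + (a + 2)) = fib (d + m + a) + fib (d + m + (a + 1)) := by
      rw [← add_assoc, fib_add_two]; rfl
    rw [h₁, h₂, fib_add_two]
    push_cast
    linear_combination ih₀ + ih₁

end Nat

namespace Matrix

variable {ι : Type*} [Fintype ι] {m : ℕ}

theorem mulVec_apply_eq_add {R κ : Type*} [NonUnitalNonAssocSemiring R] (A : Matrix κ ι R)
    {v : ι → R} {p q : ι} (hpq : p ≠ q) (hv : ∀ i, i ≠ p → i ≠ q → v i = 0) (r : κ) :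
    (A *ᵥ v) r = A r p * v p + A r q * v q :=
  Fintype.sum_eq_add p q hpq fun i hi => by simp [hv i hi.1 hi.2]

def nonnegSolutions (A : Matrix (Fin m) ι ℝ) (b : Fin m → ℝ) : Set (ι → ℝ) :=
  {x | A *ᵥ x = b ∧ ∀ i, 0 ≤ x i}

theorem exists_ne_zero_mulVec_eq_zero_of_card_lt (A : Matrix (Fin m) ι ℝ) (S : Finset ι)
    (hS : m < #S) : ∃ d : ι → ℝ, d ≠ 0 ∧ A *ᵥ d = 0 ∧ ∀ j ∉ S, d j = 0 := by
  classical
  have hdep : ¬LinearIndependent ℝ (fun j : S => Aᵀ j) := fun h => by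
    have := h.fintype_card_le_finrank
    simp only [Fintype.card_coe, Module.finrank_fin_fun] at this
    omega
  obtain ⟨g, hg, j₀, hj₀⟩ := Fintype.not_linearIndependent_iff.1 hdep
  refine ⟨fun j => if h : j ∈ S then g ⟨j, h⟩ else 0, fun h => hj₀ ?_, ?_, fun j hj => dif_neg hj⟩
  · simpa using congrFun h j₀
  · ext r
    have := congrFun hg r
    simp only [Finset.sum_apply, Pi.smul_apply, transpose_apply, smul_eq_mul] at this
    rw [mulVec, dotProduct, ← Finset.sum_subset S.subset_univ, ← Finset.sum_coe_sort]
    · simpa [mul_comm] using this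
    · intro j _ hj; simp [hj]

variable {A : Matrix (Fin m) ι ℝ} {b : Fin m → ℝ}

theorem exists_card_support_lt_of_mulVec_eq_zero (L : (ι → ℝ) →ₗ[ℝ] ℝ) {x d : ι → ℝ}
    (hx : x ∈ nonnegSolutions A b) (hd : A *ᵥ d = 0) (hdx : ∀ j, x j = 0 → d j = 0)
    (hneg : ∃ j, d j < 0) (hLd : L d ≤ 0) :
    ∃ y ∈ nonnegSolutions A b, L y ≤ L x ∧ #{i | y i ≠ 0} < #{i | x i ≠ 0} := by
  obtain ⟨hAx, hx0⟩ := hx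
  obtain ⟨j₁, hj₁⟩ := hneg
  obtain ⟨j₀, hj₀, hmin⟩ := ({j | d j < 0} : Finset ι).exists_min_image
    (fun j => x j / -d j) ⟨j₁, by simpa using hj₁⟩
  simp only [mem_filter, mem_univ, true_and] at hj₀ hmin
  set t := x j₀ / -d j₀
  have hxj₀ : 0 < x j₀ := (hx0 j₀).lt_of_ne fun h => hj₀.ne (hdx j₀ h.symm)
  have ht : 0 < t := div_pos hxj₀ (neg_pos.2 hj₀)
  have hyj₀ : x j₀ + t * d j₀ = 0 := by
    have : t * -d j₀ = x j₀ := div_mul_cancel₀ _ (neg_ne_zero.2 hj₀.ne)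
    linarith
  refine ⟨x + t • d, ⟨?_, fun i => ?_⟩, ?_, ?_⟩
  · simp [mulVec_add, mulVec_smul, hAx, hd]
  · rcases lt_or_ge (d i) 0 with hdi | hdi
    · have := (le_div_iff₀ (neg_pos.2 hdi)).1 (hmin i hdi)
      simp only [Pi.add_apply, Pi.smul_apply, smul_eq_mul]
      linarith
    · simpa using add_nonneg (hx0 i) (mul_nonneg ht.le hdi)
  · simpa using mul_nonpos_of_nonneg_of_nonpos ht.le hLd
  · refine card_lt_card ⟨fun i => ?_, fun h => ?_⟩
    · simp only [mem_filter, mem_univ, true_and, Pi.add_apply, Pi.smul_apply, smul_eq_mul]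
      intro hy hx
      simp [hx, hdx i hx] at hy
    · have hy := h (by simpa using hxj₀.ne')
      simp only [mem_filter, mem_univ, true_and, Pi.add_apply, Pi.smul_apply, smul_eq_mul] at hy
      exact hy hyj₀

theorem exists_card_support_le_of_pos_row (L : (ι → ℝ) →ₗ[ℝ] ℝ) (r : Fin m)
    (hr : ∀ j, 0 < A r j) {x : ι → ℝ} (hx : x ∈ nonnegSolutions A b) :
    ∃ y ∈ nonnegSolutions A b, #{i | y i ≠ 0} ≤ m ∧ L y ≤ L x := by
  induction hs : #{i | x i ≠ 0} using Nat.strong_induction_on generalizing x with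
  | _ s ih =>
  rcases le_or_gt s m with hsm | hsm
  · exact ⟨x, hx, hs ▸ hsm, le_rfl⟩
  obtain ⟨d, hd0, hAd, hdS⟩ := exists_ne_zero_mulVec_eq_zero_of_card_lt A _ (hs ▸ hsm)
  have hdx : ∀ j, x j = 0 → d j = 0 := fun j hj => hdS j (by simp [hj])
  have hneg : ∀ e : ι → ℝ, e ≠ 0 → A *ᵥ e = 0 → ∃ j, e j < 0 := fun e he hAe =>
    exists_neg_of_sum_mul_eq_zero hr (congrFun hAe r) he
  obtain ⟨y, hy, hLy, hys⟩ : ∃ y ∈ nonnegSolutions A b,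
      L y ≤ L x ∧ #{i | y i ≠ 0} < #{i | x i ≠ 0} := by
    rcases le_total (L d) 0 with hL | hL
    · exact exists_card_support_lt_of_mulVec_eq_zero L hx hAd hdx (hneg d hd0 hAd) hL
    · have hAd' : A *ᵥ -d = 0 := by rw [mulVec_neg, hAd, neg_zero]
      exact exists_card_support_lt_of_mulVec_eq_zero L hx hAd' (fun j hj => by simp [hdx j hj])
        (hneg (-d) (neg_ne_zero.2 hd0) hAd') (by simpa using hL)
  obtain ⟨z, hz, hzm, hLz⟩ := ih _ (hs ▸ hys) hy rfl
  exact ⟨z, hz, hzm, hLz.trans hLy⟩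

end Matrix

theorem Finset.exists_lt_and_subset_pair {α : Type*} [LinearOrder α] [Fintype α] (s : Finset α)
    (hs : #s ≤ 2) (hα : 2 ≤ Fintype.card α) : ∃ p q, p < q ∧ s ⊆ {p, q} := by
  obtain ⟨t, hst, -, ht⟩ := exists_subsuperset_card_eq (subset_univ s) hs (by simpa using hα)
  obtain ⟨a, b, hab, rfl⟩ := card_eq_two.1 ht
  rcases hab.lt_or_gt with h | h
  · exact ⟨a, b, h, hst⟩
  · exact ⟨b, a, h, pair_comm a b ▸ hst⟩

section Fibonacci

variable {n : ℕ}

@[simp] theorem Amat_zero_apply (j : Fin n) : Amat n 0 j = Nat.fib (j + 1) := by simp [Amat]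

@[simp] theorem Amat_one_apply (j : Fin n) : Amat n 1 j = Nat.fib j := by simp [Amat]

theorem yVec_apply_eq_zero {p q i : Fin n} (hp : i ≠ p) (hq : i ≠ q) :
    yVec n (p + 1) (q + 1) i = 0 := by
  simp [yVec, Fin.val_eq_val, hp, hq]

theorem yVec_apply_left (p q : Fin n) :
    yVec n (p + 1) (q + 1) p =
      (-1) ^ ((q : ℕ) - p + 1) * Nat.fib (n - (q + 1)) / Nat.fib ((q : ℕ) - p) := by
  simp [yVec]

theorem yVec_apply_right {p q : Fin n} (hpq : p < q) :
    yVec n (p + 1) (q + 1) q = Nat.fib (n - (p + 1)) / Nat.fib ((q : ℕ) - p) := by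
  simp [yVec, Fin.val_eq_val, hpq.ne']

theorem Amat_mulVec_yVec {p q : Fin n} (hpq : p < q) :
    Amat n *ᵥ yVec n (p + 1) (q + 1) = ![(Nat.fib n : ℝ), (Nat.fib (n - 1) : ℝ)] := by
  have hq := q.isLt
  have hfib : (Nat.fib ((q : ℕ) - p) : ℝ) ≠ 0 := by simpa using Nat.sub_ne_zero_of_lt hpq
  ext r
  rw [mulVec_apply_eq_add _ hpq.ne fun i => yVec_apply_eq_zero, yVec_apply_left,
    yVec_apply_right hpq]
  fin_cases r
  · have h := Nat.fib_vajda (R := ℝ) (p + 1) (q - p) (n - (q + 1))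
    rw [show (q : ℕ) - p + (p + 1) = q + 1 by omega,
      show (q : ℕ) - p + (n - (q + 1)) = n - (p + 1) by omega,
      show (q : ℕ) + 1 + (n - (q + 1)) = n by omega] at h
    dsimp only
    simp only [Fin.zero_eta, Amat_zero_apply, cons_val_zero, pow_succ]
    field_simp
    linear_combination h
  · have h := Nat.fib_vajda (R := ℝ) p (q - p) (n - (q + 1))
    rw [show (q : ℕ) - p + p = q by omega,
      show (q : ℕ) - p + (n - (q + 1)) = n - (p + 1) by omega,
      show (q : ℕ) + (n - (q + 1)) = n - 1 by omega] at h
    dsimp only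
    simp only [Fin.mk_one, Amat_one_apply, cons_val_one, cons_val_zero, pow_succ]
    field_simp
    linear_combination h

theorem eq_zero_of_Amat_mulVec_eq_zero {e : Fin n → ℝ} {p q : Fin n} (hpq : p < q)
    (he : Amat n *ᵥ e = 0) (hsupp : ∀ i, i ≠ p → i ≠ q → e i = 0) : e = 0 := by
  have row (r : Fin 2) : Amat n r p * e p + Amat n r q * e q = 0 := by
    rw [← mulVec_apply_eq_add _ hpq.ne hsupp, he, Pi.zero_apply]
  have h₀ := row 0
  have h₁ := row 1
  simp only [Amat_zero_apply, Amat_one_apply] at h₀ h₁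
  have hdet := Nat.fib_dOcagne (R := ℝ) ((q : ℕ) - p) p
  rw [show (q : ℕ) - p + p = q by omega] at hdet
  set D : ℝ := (-1) ^ (p : ℕ) * Nat.fib ((q : ℕ) - p)
  have hD : D ≠ 0 := by simpa [D] using Nat.sub_ne_zero_of_lt hpq
  have hp : e p * D = 0 := by
    linear_combination Nat.fib q * h₀ - Nat.fib (q + 1) * h₁ - e p * hdet
  have hq : e q * D = 0 := by
    linear_combination Nat.fib (p + 1) * h₁ - Nat.fib p * h₀ - e q * hdet
  funext i
  by_cases hip : i = p
  · rw [hip, (mul_eq_zero.1 hp).resolve_right hD, Pi.zero_apply]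
  by_cases hiq : i = q
  · rw [hiq, (mul_eq_zero.1 hq).resolve_right hD, Pi.zero_apply]
  exact hsupp i hip hiq

theorem eq_yVec_of_support_subset {x : Fin n → ℝ}
    (hx : Amat n *ᵥ x = ![(Nat.fib n : ℝ), (Nat.fib (n - 1) : ℝ)]) {p q : Fin n} (hpq : p < q)
    (hsupp : ∀ i, i ≠ p → i ≠ q → x i = 0) : x = yVec n (p + 1) (q + 1) :=
  sub_eq_zero.1 <| eq_zero_of_Amat_mulVec_eq_zero hpq
    (by rw [mulVec_sub, hx, Amat_mulVec_yVec hpq, sub_self])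
    fun i hp hq => by simp [hsupp i hp hq, yVec_apply_eq_zero hp hq]

theorem yVec_mem_Vplus {k l : ℕ} (hk : 1 ≤ k) (hkl : k < l) (hl : l ≤ n) (hodd : Odd (l - k)) :
    yVec n k l ∈ Vplus n := by
  obtain ⟨p, rfl⟩ : ∃ p, k = p + 1 := ⟨k - 1, by omega⟩
  obtain ⟨q, rfl⟩ : ∃ q, l = q + 1 := ⟨l - 1, by omega⟩
  refine ⟨Amat_mulVec_yVec (p := ⟨p, by omega⟩) (q := ⟨q, by omega⟩) (by simpa using hkl),
    fun i => ?_⟩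
  have hsign : (-1 : ℝ) ^ (q + 1 - (p + 1) + 1) = 1 := hodd.add_one.neg_one_pow
  unfold yVec
  rw [hsign]
  split_ifs <;> positivity

theorem mem_FplusSet_of_support_subset {x : Fin n → ℝ} (hx : x ∈ Vplus n) {p q : Fin n}
    (hpq : p < q) (hsupp : ∀ i, i ≠ p → i ≠ q → x i = 0) : x ∈ FplusSet n := by
  have hxy := eq_yVec_of_support_subset hx.1 hpq hsupp
  have hpq' : (p : ℕ) < q := hpq
  by_cases hodd : Odd ((q : ℕ) - p)
  · exact ⟨p + 1, q + 1, by omega, by omega, q.isLt, by simpa using hodd, hxy⟩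
  -- for even `q - p` the `p`-th coordinate is `-f_{n-q-1} / f_{q-p} ≥ 0`, so `q` is the last index
  have hxp := hx.2 p
  rw [hxy, yVec_apply_left, (Nat.not_odd_iff_even.1 hodd).add_one.neg_one_pow, neg_one_mul,
    neg_div, neg_nonneg, div_nonpos_iff] at hxp
  have hqn : n - (q + 1) = 0 := by
    rcases hxp with ⟨-, h⟩ | ⟨h, -⟩
    · exact absurd h (by simpa using Nat.sub_ne_zero_of_lt hpq)
    · exact Nat.fib_eq_zero.1 (by exact_mod_cast h.antisymm (Nat.cast_nonneg _))
  have hp0 : x p = 0 := by rw [hxy, yVec_apply_left, hqn, Nat.fib_zero]; simp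
  let q' : Fin n := ⟨(q : ℕ) - 1, by omega⟩
  have hxq' := eq_yVec_of_support_subset hx.1 (show q' < q from Fin.lt_def.2 (by simp [q']; omega))
    fun i hiq' hiq => if hip : i = p then hip ▸ hp0 else hsupp i hip hiq
  have hlen : (q : ℕ) + 1 - (q' + 1) = 1 := by simp only [q']; omega
  exact ⟨q' + 1, q + 1, by omega, by omega, q.isLt, by rw [hlen]; exact odd_one, hxq'⟩

theorem exists_mem_FplusSet_map_le (hn : 2 ≤ n) (L : (Fin n → ℝ) →ₗ[ℝ] ℝ) {x : Fin n → ℝ}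
    (hx : x ∈ Vplus n) : ∃ w ∈ FplusSet n, L w ≤ L x := by
  obtain ⟨y, hy, hy2, hLy⟩ :=
    exists_card_support_le_of_pos_row L 0 (fun j => by simp [Nat.fib_pos]) hx
  obtain ⟨p, q, hpq, hsub⟩ := exists_lt_and_subset_pair _ hy2 (by simpa using hn)
  refine ⟨y, mem_FplusSet_of_support_subset hy hpq fun i hip hiq => ?_, hLy⟩
  by_contra h
  simpa [hip, hiq] using hsub (mem_filter.2 ⟨mem_univ i, h⟩)

end Fibonacci

theorem stmt5_general (n : ℕ) (L : (Fin n → ℝ) →ₗ[ℝ] ℝ) (z : Fin n → ℝ)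
    (hzZ : ∀ i, ∃ m : ℤ, z i = (m : ℝ)) (hzF : z ∈ FplusSet n)
    (hmin : IsLeast (L '' FplusSet n) (L z)) :
    IsLeast (L '' VplusZ n) (L z) := by
  obtain ⟨k, l, hk, hkl, hl, hodd, rfl⟩ := hzF
  refine ⟨⟨_, ⟨yVec_mem_Vplus hk hkl hl hodd, hzZ⟩, rfl⟩, ?_⟩
  rintro _ ⟨x, ⟨hx, -⟩, rfl⟩
  obtain ⟨w, hw, hLw⟩ := exists_mem_FplusSet_map_le (by omega) L hx
  exact (hmin.2 ⟨w, hw, rfl⟩).trans hLw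

/-- Let n ≥ 1 and L : ℝ^n → ℝ linear. If there exists z ∈ ℤ^n with z ∈ F_n^+
such that L(z) = min{L(x) : x ∈ F_n^+}, then L(z) = min{L(x) : x ∈ V_n^+(ℤ)}. -/
theorem stmt5 (n : ℕ) (hn : 1 ≤ n) (L : (Fin n → ℝ) →ₗ[ℝ] ℝ) (z : Fin n → ℝ)
    (hzZ : ∀ i, ∃ m : ℤ, z i = (m : ℝ)) (hzF : z ∈ FplusSet n)
    (hmin : IsLeast (L '' FplusSet n) (L z)) :
    IsLeast (L '' VplusZ n) (L z) :=
  stmt5_general n L z hzZ hzF hmin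
end

section
/- Let n ∈ ℕ and let x = (x_1,…,x_n) be a vector of nonnegative real numbers. Let (ψ_k)_{k=1}^∞ be a sequence of positive real numbers with ψ_k → φ as k → ∞, and define H_{x,k} : (0,∞) → ℝ by H_{x,k}(t) = Σ_{j=1}^n x_j·max{f_j, ψ_k f_{j-1}}^t. Then for every T > 0, the sequence of functions H_{x,k} converges uniformly to G_x on the interval (0, T] as k → ∞. -/
set_option maxHeartbeats 1000000


/-- Let n ∈ ℕ and x ∈ ℝ^n with nonnegative entries. Let (ψ_k) be a sequence
of positive reals with ψ_k → φ = (1+√5)/2, and let H_{x,k}(t) = Σ_{j=1}^n x_j·max{f_j, ψ_k f_{j-1}}^t.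
Then for every T > 0, H_{x,k} converges uniformly on (0, T] to
G_x(t) = Σ_{j=1}^n x_j·max{f_j, φ f_{j-1}}^t as k → ∞. -/
theorem stmt11 (n : ℕ) (x : Fin n → ℝ) (hx : ∀ i, 0 ≤ x i) (ψ : ℕ → ℝ)
    (hψpos : ∀ k, 0 < ψ k)
    (hψlim : Filter.Tendsto ψ Filter.atTop (nhds ((1 + Real.sqrt 5) / 2)))
    (T : ℝ) (hT : 0 < T) :
    TendstoUniformlyOn
      (fun k t => ∑ i : Fin n,
        x i * (max (Nat.fib ((i : ℕ) + 1) : ℝ) (ψ k * (Nat.fib (i : ℕ) : ℝ))) ^ t)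
      (fun t => ∑ i : Fin n,
        x i * (max (Nat.fib ((i : ℕ) + 1) : ℝ)
          (((1 + Real.sqrt 5) / 2) * (Nat.fib (i : ℕ) : ℝ))) ^ t)
      Filter.atTop (Set.Ioc 0 T) := by
  set φ : ℝ := (1 + Real.sqrt 5) / 2 with hφdef
  have hs5 : (1:ℝ) < Real.sqrt 5 := by
    rw [show (1:ℝ) = Real.sqrt 1 by simp]
    exact Real.sqrt_lt_sqrt (by norm_num) (by norm_num)
  have hφ1 : 1 < φ := by rw [hφdef]; linarith
  set F : ℝ → ℝ → ℝ := fun c t => ∑ i : Fin n,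
      x i * (max (Nat.fib ((i : ℕ) + 1) : ℝ) (c * (Nat.fib (i : ℕ) : ℝ))) ^ t with hF
  have hcont : ContinuousOn (Function.uncurry F)
      (Set.Icc 1 (φ + 1) ×ˢ Set.Icc 0 T) := by
    apply continuousOn_finset_sum
    intro i _
    apply ContinuousOn.mul continuousOn_const
    apply ContinuousOn.rpow
    · exact ((continuous_const.max (continuous_fst.mul continuous_const)).comp
        continuous_id).continuousOn
    · exact continuous_snd.continuousOn
    · intro p hp
      left
      have h1 : (1:ℝ) ≤ (Nat.fib ((i : ℕ) + 1) : ℝ) := by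
        exact_mod_cast Nat.fib_pos.mpr (Nat.succ_pos _)
      have : (1:ℝ) ≤ max (Nat.fib ((i : ℕ) + 1) : ℝ) (p.1 * (Nat.fib (i : ℕ) : ℝ)) :=
        le_trans h1 (le_max_left _ _)
      positivity
  have hUC : UniformContinuousOn (Function.uncurry F)
      (Set.Icc 1 (φ + 1) ×ˢ Set.Icc 0 T) :=
    (isCompact_Icc.prod isCompact_Icc).uniformContinuousOn_of_continuous hcont
  have hTU : TendstoUniformlyOn F (F φ) (nhdsWithin φ (Set.Icc 1 (φ + 1)))
      (Set.Icc 0 T) :=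
    hUC.tendstoUniformlyOn ⟨hφ1.le, by linarith⟩
  have hmem : Filter.Tendsto ψ Filter.atTop (nhdsWithin φ (Set.Icc 1 (φ + 1))) := by
    rw [tendsto_nhdsWithin_iff]
    refine ⟨hψlim, hψlim.eventually (Icc_mem_nhds (by linarith) (by linarith))⟩
  intro u hu
  filter_upwards [hmem.eventually (hTU u hu)] with k hk t ht
  exact hk t (Set.Ioc_subset_Icc_self ht)
end

section
/- The set {log q / log p : p and q are prime numbers} is dense in the positive real numbers; in particular, there exists a sequence of pairs of primes (p_k, q_k) such that log q_k / log p_k → φ as k → ∞. -/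
lemma key12 (x : ℝ) (hx : 0 < x) (ε : ℝ) (hε : 0 < ε) :
    ∃ p q : ℕ, p.Prime ∧ q.Prime ∧ |Real.log q / Real.log p - x| < ε := by
  obtain ⟨p, hple, hp⟩ := Nat.exists_infinite_primes
    (max 5 (⌈Real.exp (Real.log 4 / ε)⌉₊ + 1))
  have hp5 : (5 : ℕ) ≤ p := le_trans (le_max_left _ _) hple
  have hp1 : (1 : ℝ) ≤ (p : ℝ) := by exact_mod_cast le_trans (by norm_num) hp5
  have hlogp : Real.log 4 / ε < Real.log p := by
    have h1 : Real.exp (Real.log 4 / ε) < (p : ℝ) := by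
      have : (⌈Real.exp (Real.log 4 / ε)⌉₊ : ℝ) < (p : ℝ) := by
        exact_mod_cast lt_of_lt_of_le (Nat.lt_succ_self _)
          (le_trans (le_max_right _ _) hple)
      exact lt_of_le_of_lt (Nat.le_ceil _) this
    calc Real.log 4 / ε = Real.log (Real.exp (Real.log 4 / ε)) := (Real.log_exp _).symm
      _ < Real.log p := Real.log_lt_log (Real.exp_pos _) h1
  have hlog4 : (0 : ℝ) < Real.log 4 := Real.log_pos (by norm_num)
  have hlogppos : 0 < Real.log p :=
    lt_trans (div_pos hlog4 hε) hlogp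
  -- n = ceil of p^x
  set n : ℕ := ⌈(p : ℝ) ^ x⌉₊ with hn
  have hpx1 : (1 : ℝ) ≤ (p : ℝ) ^ x := Real.one_le_rpow hp1 hx.le
  have hpxpos : 0 < (p : ℝ) ^ x := lt_of_lt_of_le one_pos hpx1
  have hn0 : n ≠ 0 := by
    have : (1 : ℝ) ≤ (n : ℝ) := le_trans hpx1 (Nat.le_ceil _)
    intro h; rw [h] at this; norm_num at this
  obtain ⟨q, hq, hnq, hq2n⟩ := Nat.exists_prime_lt_and_le_two_mul n hn0
  refine ⟨p, q, hp, hq, ?_⟩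
  have hqpx : (p : ℝ) ^ x ≤ (q : ℝ) := by
    calc (p:ℝ)^x ≤ (n:ℝ) := Nat.le_ceil _
      _ ≤ (q:ℝ) := by exact_mod_cast hnq.le
  have hq4 : (q : ℝ) ≤ 4 * (p : ℝ) ^ x := by
    have hceil : (n : ℝ) ≤ (p:ℝ)^x + 1 := le_of_lt (Nat.ceil_lt_add_one hpxpos.le)
    have : (q : ℝ) ≤ 2 * n := by exact_mod_cast hq2n
    calc (q:ℝ) ≤ 2 * n := this
      _ ≤ 2 * ((p:ℝ)^x + 1) := by linarith
      _ ≤ 4 * (p:ℝ)^x := by linarith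
  have hqpos : (0:ℝ) < q := lt_of_lt_of_le hpxpos hqpx
  have hlow : x ≤ Real.log q / Real.log p := by
    rw [le_div_iff₀ hlogppos]
    calc x * Real.log p = Real.log ((p:ℝ)^x) := (Real.log_rpow (lt_of_lt_of_le one_pos hp1) x).symm
      _ ≤ Real.log q := Real.log_le_log hpxpos hqpx
  have hhigh : Real.log q / Real.log p - x < ε := by
    have h1 : Real.log q ≤ Real.log 4 + x * Real.log p := by
      calc Real.log q ≤ Real.log (4 * (p:ℝ)^x) := Real.log_le_log hqpos hq4
        _ = Real.log 4 + Real.log ((p:ℝ)^x) := Real.log_mul (by norm_num) (ne_of_gt hpxpos)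
        _ = Real.log 4 + x * Real.log p := by
            rw [Real.log_rpow (lt_of_lt_of_le one_pos hp1)]
    have h2 : Real.log q / Real.log p ≤ Real.log 4 / Real.log p + x := by
      rw [div_le_iff₀ hlogppos]
      have : Real.log 4 / Real.log p * Real.log p = Real.log 4 := by
        field_simp
      linarith [this]
    have h3 : Real.log 4 / Real.log p < ε := by
      rw [div_lt_iff₀ hlogppos, mul_comm]
      exact (div_lt_iff₀ hε).mp hlogp
    linarith
  rw [abs_sub_lt_iff]
  constructor <;> linarith

/-- The set {log q / log p : p, q prime} is dense in the positive reals;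
in particular there exists a sequence of pairs of primes (p_k, q_k) with
log q_k / log p_k → φ = (1+√5)/2. -/
theorem stmt12 :
    (Set.Ioi (0 : ℝ) ⊆
      closure {r : ℝ | ∃ p q : ℕ, p.Prime ∧ q.Prime ∧ r = Real.log q / Real.log p})
    ∧ ∃ p q : ℕ → ℕ, (∀ k, (p k).Prime ∧ (q k).Prime) ∧
        Filter.Tendsto (fun k => Real.log (q k) / Real.log (p k)) Filter.atTop
          (nhds ((1 + Real.sqrt 5) / 2)) := by
  constructor
  · intro x hx
    rw [Metric.mem_closure_iff]
    intro ε hε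
    obtain ⟨p, q, hp, hq, hd⟩ := key12 x hx ε hε
    exact ⟨Real.log q / Real.log p, ⟨p, q, hp, hq, rfl⟩, by
      rwa [Real.dist_eq, abs_sub_comm]⟩
  · have hφ : (0:ℝ) < (1 + Real.sqrt 5) / 2 := by positivity
    choose p q hp hq hd using fun k : ℕ =>
      key12 ((1 + Real.sqrt 5) / 2) hφ (1 / (k + 1)) (by positivity)
    refine ⟨p, q, fun k => ⟨hp k, hq k⟩, ?_⟩
    rw [Metric.tendsto_atTop]
    intro ε hε
    obtain ⟨N, hN⟩ := exists_nat_one_div_lt hε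
    refine ⟨N, fun n hn => ?_⟩
    rw [Real.dist_eq]
    calc |Real.log (q n) / Real.log (p n) - (1 + Real.sqrt 5) / 2| < 1 / (n + 1) := hd n
      _ ≤ 1 / (N + 1) := by
          apply one_div_le_one_div_of_le (by positivity)
          exact_mod_cast Nat.succ_le_succ hn
      _ < ε := hN
end

section
/- For every integer n ≥ 3, the cardinality of V_n^+(ℤ) is at least f_n. -/
/-! The columns of `A_n` are `c_j = (f_{j+1}, f_j)`; the first four are `(1,0), (1,1), (2,1)`
and `(3,2)`. Since `f_n = f_{n-2} + f_{n-1}`, for every pair `(s, t)` with `s + t ≤ f_{n-2}` and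
`s + 2t ≤ f_{n-1}` the vector `(f_{n-2} - s - t, f_{n-1} - s - 2t, s, t, 0, …, 0)` lies in
`V_n^+(ℤ)`. Already the pairs with `t ≤ 2` number at least `f_n`: enumerate them in blocks
`t = 0, 1, 2` of sizes `f_{n-2} + 1`, `f_{n-2}` and `f_{n-3} - 1` (only `t = 0` when `n = 3`). -/

open Finset

theorem Nat.fib_eq_fib_sub_two_add_fib_sub_one {n : ℕ} (hn : 2 ≤ n) :
    fib n = fib (n - 2) + fib (n - 1) := by
  obtain ⟨k, rfl⟩ := Nat.exists_eq_add_of_le' hn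
  simpa using fib_add_two

theorem natCast_mem_VplusZ {n : ℕ} {v : ℕ → ℕ}
    (h₀ : ∑ j ∈ range n, Nat.fib (j + 1) * v j = Nat.fib n)
    (h₁ : ∑ j ∈ range n, Nat.fib j * v j = Nat.fib (n - 1)) :
    (fun j : Fin n => (v j : ℝ)) ∈ VplusZ n := by
  refine ⟨⟨?_, fun _ => Nat.cast_nonneg _⟩, fun j => ⟨v j, rfl⟩⟩
  ext r
  fin_cases r
  · simp only [Matrix.mulVec, dotProduct, Amat, Fin.isValue, Fin.zero_eta, Matrix.of_apply,
      ↓reduceIte, Nat.succ_eq_add_one, Nat.reduceAdd, Matrix.cons_val_zero]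
    rw [Fin.sum_univ_eq_sum_range (fun j => (Nat.fib (j + 1) : ℝ) * v j)]
    exact_mod_cast h₀
  · simp only [Matrix.mulVec, dotProduct, Amat, Fin.isValue, Fin.mk_one, Matrix.of_apply,
      one_ne_zero, ↓reduceIte, Nat.succ_eq_add_one, Nat.reduceAdd, Matrix.cons_val_one,
      Matrix.cons_val_fin_one]
    rw [Fin.sum_univ_eq_sum_range (fun j => (Nat.fib j : ℝ) * v j)]
    exact_mod_cast h₁

def quadVec (a b s t : ℕ) : ℕ → ℕ
  | 0 => a
  | 1 => b
  | 2 => s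
  | 3 => t
  | _ => 0

theorem sum_range_mul_quadVec (g : ℕ → ℕ) {n a b s t : ℕ} (hn : 3 ≤ n) (ht : t = 0 ∨ 4 ≤ n) :
    ∑ j ∈ range n, g j * quadVec a b s t j = g 0 * a + g 1 * b + g 2 * s + g 3 * t := by
  obtain ⟨rfl, rfl⟩ | ⟨k, rfl⟩ : (t = 0 ∧ n = 3) ∨ ∃ k, n = k + 4 :=
    (em (4 ≤ n)).symm.imp (fun h => ⟨ht.resolve_right h, by omega⟩) fun h => ⟨n - 4, by omega⟩
  · simp [sum_range_succ, quadVec]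
  · simp only [sum_range_succ']
    simp only [quadVec, mul_zero, sum_const_zero, zero_add, Nat.reduceAdd]
    ring

def fibSolution (n : ℕ) (p : ℕ × ℕ) : ℕ → ℕ :=
  quadVec (Nat.fib (n - 2) - p.1 - p.2) (Nat.fib (n - 1) - p.1 - 2 * p.2) p.1 p.2

theorem fibSolution_mem {n : ℕ} {p : ℕ × ℕ} (hn : 3 ≤ n) (hF : p.1 + p.2 ≤ Nat.fib (n - 2))
    (hG : p.1 + 2 * p.2 ≤ Nat.fib (n - 1)) (ht : p.2 = 0 ∨ 4 ≤ n) :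
    (fun j : Fin n => (fibSolution n p j : ℝ)) ∈ VplusZ n := by
  have hrec := Nat.fib_eq_fib_sub_two_add_fib_sub_one (show 2 ≤ n by omega)
  apply natCast_mem_VplusZ <;> rw [fibSolution, sum_range_mul_quadVec _ hn ht]
  all_goals
    simp only [Nat.fib_zero, Nat.fib_one, Nat.fib_add_two, Nat.reduceAdd, zero_mul, one_mul,
      zero_add]
    omega

theorem fibSolution_injective {n : ℕ} {p q : ℕ × ℕ} (hn : 3 ≤ n) (hp : p.2 = 0 ∨ 4 ≤ n)
    (hq : q.2 = 0 ∨ 4 ≤ n)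
    (h : (fun j : Fin n => (fibSolution n p j : ℝ)) = fun j : Fin n => (fibSolution n q j : ℝ)) :
    p = q := by
  have coord (j : ℕ) (hj : j < n) : fibSolution n p j = fibSolution n q j := by
    exact_mod_cast congrFun h ⟨j, hj⟩
  refine Prod.ext (coord 2 (by omega)) ?_
  by_cases h4 : 4 ≤ n
  · exact coord 3 (by omega)
  · rw [hp.resolve_right h4, hq.resolve_right h4]

def blockIndex (F m : ℕ) : ℕ × ℕ :=
  if m ≤ F then (m, 0) else if m ≤ 2 * F then (m - (F + 1), 1) else (m - (2 * F + 1), 2)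

theorem blockIndex_injective (F : ℕ) : Function.Injective (blockIndex F) := by
  intro m m' h
  simp only [blockIndex] at h
  split_ifs at h <;> simp only [Prod.mk.injEq] at h <;> omega

theorem blockIndex_le {F G m : ℕ} (hFG : F ≤ G) (hG : G ≤ 2 * F) (hm : m < F + G) :
    (blockIndex F m).1 + (blockIndex F m).2 ≤ F ∧
      (blockIndex F m).1 + 2 * (blockIndex F m).2 ≤ G := by
  unfold blockIndex
  split_ifs <;> dsimp only <;> omega

theorem blockIndex_snd_of_le {F m : ℕ} (h : m ≤ F) : (blockIndex F m).2 = 0 := by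
  simp [blockIndex, h]

/-- For every integer n ≥ 3, the cardinality of V_n^+(ℤ) is at least f_n. -/
theorem stmt13 (n : ℕ) (hn : 3 ≤ n) :
    (Nat.fib n : Cardinal) ≤ Cardinal.mk (VplusZ n) := by
  set F := Nat.fib (n - 2)
  set G := Nat.fib (n - 1)
  have hfib : Nat.fib n = F + G := Nat.fib_eq_fib_sub_two_add_fib_sub_one (by omega)
  have hG : G = Nat.fib (n - 3) + F := by
    simpa [Nat.sub_sub] using Nat.fib_eq_fib_sub_two_add_fib_sub_one (show 2 ≤ n - 1 by omega)
  have hFG : F ≤ G := by omega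
  have hGF : G ≤ 2 * F := by
    have : Nat.fib (n - 3) ≤ F := Nat.fib_mono (by omega)
    omega
  have hm (m : Fin (Nat.fib n)) : m < F + G := hfib ▸ m.2
  have ht (m : Fin (Nat.fib n)) : (blockIndex F m).2 = 0 ∨ 4 ≤ n := by
    by_cases h4 : 4 ≤ n
    · exact Or.inr h4
    · obtain rfl : n = 3 := by omega
      -- `m < f_3 = f_1 + 1`
      exact Or.inl (blockIndex_snd_of_le (Nat.le_of_lt_succ m.2))
  let φ (m : Fin (Nat.fib n)) : VplusZ n :=
    ⟨_, fibSolution_mem hn (blockIndex_le hFG hGF (hm m)).1 (blockIndex_le hFG hGF (hm m)).2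
      (ht m)⟩
  have hφ : Function.Injective φ := fun m m' h => Fin.ext <|
    blockIndex_injective F (fibSolution_injective hn (ht m) (ht m') (congrArg Subtype.val h))
  simpa using Cardinal.mk_le_of_injective hφ
end

section
/- Let n ≥ 3 be an integer. For 1 ≤ i ≤ n−2, let b_n(i) ∈ ℝ^n be the vector whose entries in positions i and i+1 equal −1, whose entry in position i+2 equals 1, and whose other entries are 0, and let Λ_n(i) = {y_n(i,i+1) + k·b_n(i) : k ∈ ℤ, 0 ≤ k < f_{n-i-1}}. Then: (a) A_n b_n(i) = 0 for all 1 ≤ i ≤ n−2; (b) Λ_n(i) ⊆ V_n^+(ℤ) for all 1 ≤ i ≤ n−2; (c) Λ_n(i) ∩ Λ_n(j) = ∅ whenever 1 ≤ i < j ≤ n−2; (d) #Λ_n(i) = f_{n-i-1} for all 1 ≤ i ≤ n−2; (e) y_n(n−1,n) ∉ Λ_n(i) for every 1 ≤ i ≤ n−2. -/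
/-- b_n(i) ∈ ℝ^n (1-indexed): entries −1 in positions i and i+1, entry 1 in position i+2,
and 0 elsewhere. -/
noncomputable def bVec (n i : ℕ) : Fin n → ℝ := fun j =>
  if (j : ℕ) + 1 = i ∨ (j : ℕ) + 1 = i + 1 then -1
  else if (j : ℕ) + 1 = i + 2 then 1 else 0

/-- Λ_n(i) = {y_n(i,i+1) + k·b_n(i) : k ∈ ℤ, 0 ≤ k < f_{n-i-1}}. -/
def Lambda (n i : ℕ) : Set (Fin n → ℝ) :=
  {v | ∃ k : ℤ, 0 ≤ k ∧ (k : ℝ) < (Nat.fib (n - i - 1) : ℝ) ∧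
    v = yVec n i (i + 1) + (k : ℝ) • bVec n i}

lemma bVec_eq (n i : ℕ) (hi : 1 ≤ i) (hn : i + 2 ≤ n) :
    bVec n i = -(Pi.single (⟨i-1, by omega⟩ : Fin n) (1:ℝ) : Fin n → ℝ)
      - (Pi.single (⟨i, by omega⟩ : Fin n) (1:ℝ) : Fin n → ℝ)
      + (Pi.single (⟨i+1, by omega⟩ : Fin n) (1:ℝ) : Fin n → ℝ) := by
  funext j
  simp only [bVec, Pi.add_apply, Pi.sub_apply, Pi.neg_apply, Pi.single_apply, Fin.ext_iff]
  split_ifs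
  any_goals (exfalso; omega)
  all_goals norm_num

lemma yVec_eq (n i : ℕ) (hi : 1 ≤ i) (hn : i + 1 ≤ n) :
    yVec n i (i+1)
      = (Nat.fib (n-i-1) : ℝ) • (Pi.single (⟨i-1, by omega⟩ : Fin n) (1:ℝ) : Fin n → ℝ)
      + (Nat.fib (n-i) : ℝ) • (Pi.single (⟨i, by omega⟩ : Fin n) (1:ℝ) : Fin n → ℝ) := by
  have h1 : i + 1 - i = 1 := by omega
  have h2 : n - (i + 1) = n - i - 1 := by omega
  funext j
  simp only [yVec, Pi.add_apply, Pi.smul_apply, Pi.single_apply, Fin.ext_iff, h1, h2,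
    Nat.fib_one, Nat.cast_one, div_one, smul_eq_mul]
  split_ifs
  any_goals (exfalso; omega)
  all_goals norm_num

lemma lam_apply (n i : ℕ) (hi : 1 ≤ i) (k : ℝ) (j : Fin n) :
    (yVec n i (i+1) + k • bVec n i) j =
      if (j:ℕ) + 1 = i then (Nat.fib (n - i - 1) : ℝ) - k
      else if (j:ℕ) = i then (Nat.fib (n - i) : ℝ) - k
      else if (j:ℕ) = i + 1 then k
      else 0 := by
  have h1 : i + 1 - i = 1 := by omega
  have h2 : n - (i + 1) = n - i - 1 := by omega
  simp only [Pi.add_apply, Pi.smul_apply, smul_eq_mul, yVec, bVec, h1, h2,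
    Nat.fib_one, Nat.cast_one, div_one]
  split_ifs
  any_goals (exfalso; omega)
  all_goals (push_cast; try ring)

lemma lam_apply_pos1 (n i : ℕ) (hi : 1 ≤ i) (k : ℝ) (t : Fin n) (h : (t:ℕ) + 1 = i) :
    (yVec n i (i+1) + k • bVec n i) t = (Nat.fib (n-i-1) : ℝ) - k := by
  rw [lam_apply n i hi, if_pos h]

lemma lam_apply_pos3 (n i : ℕ) (hi : 1 ≤ i) (k : ℝ) (t : Fin n)
    (h1 : ¬ ((t:ℕ) + 1 = i)) (h2 : ¬ ((t:ℕ) = i)) (h3 : (t:ℕ) = i + 1) :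
    (yVec n i (i+1) + k • bVec n i) t = k := by
  rw [lam_apply n i hi, if_neg h1, if_neg h2, if_pos h3]

lemma lam_apply_zero (n i : ℕ) (hi : 1 ≤ i) (k : ℝ) (t : Fin n)
    (h1 : ¬ ((t:ℕ) + 1 = i)) (h2 : ¬ ((t:ℕ) = i)) (h3 : ¬ ((t:ℕ) = i + 1)) :
    (yVec n i (i+1) + k • bVec n i) t = 0 := by
  rw [lam_apply n i hi, if_neg h1, if_neg h2, if_neg h3]

lemma yVec_zero (n k l : ℕ) (t : Fin n) (h1 : ¬ ((t:ℕ) + 1 = k)) (h2 : ¬ ((t:ℕ) + 1 = l)) :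
    yVec n k l t = 0 := by
  simp only [yVec]
  rw [if_neg h1, if_neg h2]

lemma mulVec_bVec (n i : ℕ) (hi : 1 ≤ i) (hn : i + 2 ≤ n) :
    (Amat n).mulVec (bVec n i) = 0 := by
  rw [bVec_eq n i hi hn]
  have e1 : i - 1 + 1 = i := by omega
  have f1 : (Nat.fib (i+1) : ℝ) = Nat.fib (i-1) + Nat.fib i := by
    have := Nat.fib_add_two (n := i - 1)
    rw [show i - 1 + 2 = i + 1 by omega, e1] at this
    exact_mod_cast this
  have f2 : (Nat.fib (i+1+1) : ℝ) = Nat.fib i + Nat.fib (i+1) := by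
    have := Nat.fib_add_two (n := i)
    exact_mod_cast this
  funext r
  fin_cases r <;>
  · simp [Matrix.mulVec_add, Matrix.mulVec_sub, Matrix.mulVec_neg, Matrix.mulVec_single,
      Amat, e1]
    linarith [f1, f2]

lemma mulVec_yVec (n i : ℕ) (hi : 1 ≤ i) (hn : i + 2 ≤ n) :
    (Amat n).mulVec (yVec n i (i+1)) = ![(Nat.fib n : ℝ), (Nat.fib (n - 1) : ℝ)] := by
  rw [yVec_eq n i hi (by omega)]
  have e1 : i - 1 + 1 = i := by omega
  have key : (Nat.fib (n - 1) : ℝ)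
      = Nat.fib (i - 1) * Nat.fib (n - i - 1) + Nat.fib i * Nat.fib (n - i) := by
    have h := Nat.fib_add (i - 1) (n - i - 1)
    rw [show i - 1 + (n - i - 1) + 1 = n - 1 by omega, e1] at h
    rw [show n - i = n - i - 1 + 1 by omega]
    exact_mod_cast h
  have key2 : (Nat.fib n : ℝ)
      = Nat.fib i * Nat.fib (n - i - 1) + Nat.fib (i + 1) * Nat.fib (n - i) := by
    have h := Nat.fib_add i (n - i - 1)
    rw [show i + (n - i - 1) + 1 = n by omega] at h
    rw [show n - i = n - i - 1 + 1 by omega]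
    exact_mod_cast h
  funext r
  fin_cases r <;>
  · simp [Matrix.mulVec_add, Matrix.mulVec_smul, Matrix.mulVec_single, Amat, e1]
    linarith [key, key2]

/-- For n ≥ 3: (a) A_n b_n(i) = 0; (b) Λ_n(i) ⊆ V_n^+(ℤ);
(c) Λ_n(i) ∩ Λ_n(j) = ∅ for i < j; (d) #Λ_n(i) = f_{n-i-1};
(e) y_n(n−1,n) ∉ Λ_n(i); all for indices in the range 1 ≤ i (< j) ≤ n−2. -/
theorem stmt14 (n : ℕ) (hn : 3 ≤ n) :
    (∀ i, 1 ≤ i → i ≤ n - 2 → (Amat n).mulVec (bVec n i) = 0)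
    ∧ (∀ i, 1 ≤ i → i ≤ n - 2 → Lambda n i ⊆ VplusZ n)
    ∧ (∀ i j, 1 ≤ i → i < j → j ≤ n - 2 → Lambda n i ∩ Lambda n j = ∅)
    ∧ (∀ i, 1 ≤ i → i ≤ n - 2 → (Lambda n i).ncard = Nat.fib (n - i - 1))
    ∧ (∀ i, 1 ≤ i → i ≤ n - 2 → yVec n (n - 1) n ∉ Lambda n i) := by
  refine ⟨fun i hi hi2 => mulVec_bVec n i hi (by omega), ?_, ?_, ?_, ?_⟩
  · -- (b)
    rintro i hi hi2 x ⟨k, hk0, hk1, rfl⟩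
    have hfmono : (Nat.fib (n - i - 1) : ℝ) ≤ (Nat.fib (n - i) : ℝ) := by
      exact_mod_cast Nat.fib_mono (show n - i - 1 ≤ n - i by omega)
    refine ⟨⟨?_, ?_⟩, ?_⟩
    · rw [Matrix.mulVec_add, Matrix.mulVec_smul, mulVec_bVec n i hi (by omega),
        mulVec_yVec n i hi (by omega), smul_zero, add_zero]
    · intro j
      rw [lam_apply n i hi]
      have h0 : (0:ℝ) ≤ (k:ℝ) := by exact_mod_cast hk0
      split_ifs <;> linarith
    · intro j
      rw [lam_apply n i hi]
      split_ifs
      · exact ⟨(Nat.fib (n - i - 1) : ℤ) - k, by push_cast; ring⟩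
      · exact ⟨(Nat.fib (n - i) : ℤ) - k, by push_cast; ring⟩
      · exact ⟨k, rfl⟩
      · exact ⟨0, by norm_num⟩
  · -- (c)
    rintro i j hi hij hj2
    rw [Set.eq_empty_iff_forall_notMem]
    rintro x ⟨⟨k, hk0, hk1, rfl⟩, ⟨k', hk0', hk1', hx⟩⟩
    have hlt : i - 1 < n := by omega
    have hv := congrFun hx (⟨i-1, hlt⟩ : Fin n)
    rw [lam_apply_pos1 n i hi (k:ℝ) _ (show i - 1 + 1 = i by omega),
      lam_apply_zero n j (by omega) (k':ℝ) _ (show ¬ (i - 1 + 1 = j) by omega)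
        (show ¬ (i - 1 = j) by omega) (show ¬ (i - 1 = j + 1) by omega)] at hv
    linarith
  · -- (d)
    intro i hi hi2
    have hkey : Lambda n i = ↑((Finset.range (Nat.fib (n - i - 1))).image
        (fun m : ℕ => yVec n i (i+1) + (m:ℝ) • bVec n i)) := by
      ext x
      simp only [Finset.coe_image, Set.mem_image, Finset.mem_coe, Finset.mem_range, Lambda,
        Set.mem_setOf_eq]
      constructor
      · rintro ⟨k, hk0, hk1, rfl⟩
        refine ⟨k.toNat, ?_, ?_⟩
        · have : k < (Nat.fib (n - i - 1) : ℤ) := by exact_mod_cast hk1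
          omega
        · have hc : ((k.toNat : ℕ) : ℝ) = (k : ℝ) := by
            exact_mod_cast congrArg (fun z : ℤ => (z : ℝ)) (Int.toNat_of_nonneg hk0)
          rw [hc]
      · rintro ⟨m, hm, rfl⟩
        exact ⟨(m:ℤ), by positivity, by exact_mod_cast hm, by push_cast; ring⟩
    rw [hkey, Set.ncard_coe_finset, Finset.card_image_of_injOn, Finset.card_range]
    intro a _ b _ hab
    have h : (yVec n i (i+1) + (a:ℝ) • bVec n i) (⟨i+1, by omega⟩ : Fin n)
        = (yVec n i (i+1) + (b:ℝ) • bVec n i) (⟨i+1, by omega⟩ : Fin n) :=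
      congrFun hab _
    rw [lam_apply_pos3 n i hi (a:ℝ) _ (show ¬ (i + 1 + 1 = i) by omega)
        (show ¬ (i + 1 = i) by omega) rfl,
      lam_apply_pos3 n i hi (b:ℝ) _ (show ¬ (i + 1 + 1 = i) by omega)
        (show ¬ (i + 1 = i) by omega) rfl] at h
    exact_mod_cast h
  · -- (e)
    rintro i hi hi2 ⟨k, hk0, hk1, hx⟩
    have hlt : i - 1 < n := by omega
    have hv := congrFun hx (⟨i-1, hlt⟩ : Fin n)
    rw [lam_apply_pos1 n i hi (k:ℝ) _ (show i - 1 + 1 = i by omega),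
      yVec_zero n (n-1) n _ (show ¬ (i - 1 + 1 = n - 1) by omega)
        (show ¬ (i - 1 + 1 = n) by omega)] at hv
    linarith
end

section
/- For every integer n ≥ 3, the cardinality of F_n equals (n² − 3n + 4)/2. -/
/-- F_n = {y_n(k,ℓ) : 1 ≤ k < ℓ ≤ n}. -/
def Fset (n : ℕ) : Set (Fin n → ℝ) :=
  {v | ∃ k l : ℕ, 1 ≤ k ∧ k < l ∧ l ≤ n ∧ v = yVec n k l}

lemma fib_cast_ne {m : ℕ} (h : 1 ≤ m) : (Nat.fib m : ℝ) ≠ 0 := by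
  have := Nat.fib_pos.mpr h
  exact_mod_cast this.ne'

lemma yVec_support {n k l : ℕ} {i : Fin n} (h : yVec n k l i ≠ 0) :
    (i : ℕ) + 1 = k ∨ (i : ℕ) + 1 = l := by
  unfold yVec at h
  split at h
  · left; assumption
  split at h
  · right; assumption
  exact absurd rfl h

lemma yVec_at_l {n k l : ℕ} (h1 : 1 ≤ k) (h2 : k < l) (h3 : l ≤ n) {i : Fin n}
    (hi : (i : ℕ) + 1 = l) : yVec n k l i ≠ 0 := by
  unfold yVec
  rw [if_neg (by omega), if_pos hi]
  exact div_ne_zero (fib_cast_ne (by omega)) (fib_cast_ne (by omega))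

lemma yVec_at_k {n k l : ℕ} (h2 : k < l) (h4 : l < n) {i : Fin n}
    (hi : (i : ℕ) + 1 = k) : yVec n k l i ≠ 0 := by
  unfold yVec
  rw [if_pos hi]
  rw [div_ne_zero_iff]
  refine ⟨mul_ne_zero (pow_ne_zero _ (by norm_num)) (fib_cast_ne (by omega)),
    fib_cast_ne (by omega)⟩

lemma yVec_inj {n k l k' l' : ℕ} (h1 : 1 ≤ k) (h2 : k < l) (h3 : l < n)
    (h1' : 1 ≤ k') (h2' : k' < l') (h3' : l' < n)
    (h : yVec n k l = yVec n k' l') : k = k' ∧ l = l' := by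
  have hil : ((⟨l - 1, by omega⟩ : Fin n) : ℕ) + 1 = l := by simp; omega
  have hil' : ((⟨l' - 1, by omega⟩ : Fin n) : ℕ) + 1 = l' := by simp; omega
  have d1 : l' = k ∨ l' = l := by
    have := yVec_at_l h1' h2' h3'.le hil'
    rw [← h] at this
    simpa [hil'] using yVec_support this
  have d2 : l = k' ∨ l = l' := by
    have := yVec_at_l h1 h2 h3.le hil
    rw [h] at this
    simpa [hil] using yVec_support this
  have hl : l = l' := by omega
  subst hl
  have hik' : ((⟨k' - 1, by omega⟩ : Fin n) : ℕ) + 1 = k' := by simp; omega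
  have d3 : k' = k ∨ k' = l := by
    have := yVec_at_k h2' h3' hik'
    rw [← h] at this
    simpa [hik'] using yVec_support this
  refine ⟨by omega, rfl⟩

lemma yVec_top {n k : ℕ} (h1 : 1 ≤ k) (h2 : k < n) : yVec n k n = yVec n 1 n := by
  funext i
  unfold yVec
  have hk : (Nat.fib (n - k) : ℝ) ≠ 0 := fib_cast_ne (by omega)
  have h1' : (Nat.fib (n - 1) : ℝ) ≠ 0 := fib_cast_ne (by omega)
  simp only [Nat.sub_self, Nat.fib_zero, Nat.cast_zero]
  split_ifs <;>
    first
      | (exfalso; omega)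
      | simp
      | (rw [div_self hk, div_self h1'])

/-- For every integer n ≥ 3, #F_n = (n² − 3n + 4)/2. -/
theorem stmt15 (n : ℕ) (hn : 3 ≤ n) :
    2 * (Fset n).ncard = n ^ 2 - 3 * n + 4 := by
  classical
  set S : Finset (ℕ × ℕ) :=
    (Finset.range n).biUnion (fun l => (Finset.Ico 1 l).image fun k => (k, l)) with hS
  have hmemS : ∀ p : ℕ × ℕ, p ∈ S ↔ 1 ≤ p.1 ∧ p.1 < p.2 ∧ p.2 < n := by
    rintro ⟨k, l⟩
    simp only [hS, Finset.mem_biUnion, Finset.mem_range, Finset.mem_image, Finset.mem_Ico,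
      Prod.mk.injEq]
    constructor
    · rintro ⟨a, ha, b, hb, rfl, rfl⟩; exact ⟨hb.1, hb.2, ha⟩
    · rintro ⟨hk1, hkl, hln⟩; exact ⟨l, hln, k, ⟨hk1, hkl⟩, rfl, rfl⟩
  set F : Finset (Fin n → ℝ) := S.image (fun p => yVec n p.1 p.2) ∪ {yVec n 1 n} with hF
  have hset : Fset n = ↑F := by
    ext v
    constructor
    · rintro ⟨k, l, hk, hkl, hln, rfl⟩
      rcases lt_or_eq_of_le hln with h | h
      · simp only [hF, Finset.coe_union, Set.mem_union, Finset.mem_coe, Finset.mem_image]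
        exact Or.inl ⟨(k, l), (hmemS (k, l)).mpr ⟨hk, hkl, h⟩, rfl⟩
      · subst h
        rw [yVec_top hk hkl]
        simp [hF]
    · intro hv
      simp only [hF, Finset.coe_union, Set.mem_union, Finset.mem_coe, Finset.mem_image,
        Finset.mem_singleton] at hv
      rcases hv with ⟨p, hp, rfl⟩ | rfl
      · obtain ⟨h1, h2, h3⟩ := (hmemS p).mp hp
        exact ⟨p.1, p.2, h1, h2, h3.le, rfl⟩
      · exact ⟨1, n, le_refl 1, by omega, le_refl n, rfl⟩
  have hinj : Set.InjOn (fun p : ℕ × ℕ => yVec n p.1 p.2) ↑S := by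
    rintro ⟨k, l⟩ hkl ⟨k', l'⟩ hkl' h
    obtain ⟨a1, a2, a3⟩ := (hmemS _).mp hkl
    obtain ⟨b1, b2, b3⟩ := (hmemS _).mp hkl'
    obtain ⟨e1, e2⟩ := yVec_inj a1 a2 a3 b1 b2 b3 h
    exact Prod.ext e1 e2
  have hnotmem : yVec n 1 n ∉ S.image (fun p => yVec n p.1 p.2) := by
    rw [Finset.mem_image]
    rintro ⟨⟨k, l⟩, hp, heq⟩
    obtain ⟨a1, a2, a3⟩ := (hmemS _).mp hp
    have hil : ((⟨l - 1, by omega⟩ : Fin n) : ℕ) + 1 = l := by simp; omega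
    have hne := yVec_at_l a1 a2 a3.le hil
    rw [heq] at hne
    have := yVec_support hne
    rw [hil] at this
    omega
  have hcardF : F.card = S.card + 1 := by
    have hdisj : Disjoint (S.image (fun p => yVec n p.1 p.2)) ({yVec n 1 n} : Finset _) := by
      rw [Finset.disjoint_singleton_right]; exact hnotmem
    rw [hF, Finset.card_union_of_disjoint hdisj,
      Finset.card_image_of_injOn hinj, Finset.card_singleton]
  have hcardS : 2 * S.card = (n - 1) * (n - 2) := by
    rw [hS, Finset.card_biUnion]
    · have : ∀ l ∈ Finset.range n, ((Finset.Ico 1 l).image fun k => (k, l)).card = l - 1 := by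
        intro l _
        rw [Finset.card_image_of_injective _ (fun a b hab => by simpa using hab)]
        simp [Nat.card_Ico]
      rw [Finset.sum_congr rfl this]
      obtain ⟨m, rfl⟩ : ∃ m, n = m + 1 := ⟨n - 1, by omega⟩
      rw [Finset.sum_range_succ']
      simp only [Nat.add_sub_cancel, Nat.zero_sub, add_zero]
      rw [mul_comm, Finset.sum_range_id_mul_two]
      simp
    · intro a _ b _ hab
      simp only [Finset.disjoint_left, Finset.mem_image, Finset.mem_Ico]
      rintro p ⟨x, _, rfl⟩ ⟨y, _, h⟩
      exact hab (Prod.ext_iff.mp h).2.symm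
  rw [hset, Set.ncard_coe_finset, hcardF]
  obtain ⟨a, rfl⟩ : ∃ a, n = a + 3 := ⟨n - 3, by omega⟩
  have h1 : (a + 3) ^ 2 = a * a + 6 * a + 9 := by ring
  obtain ⟨b, hb⟩ : ∃ b, a * a = b := ⟨_, rfl⟩
  rw [h1, hb]
  have h2 : (a + 3 - 1) * (a + 3 - 2) = b + 3 * a + 2 := by
    simp only [Nat.add_sub_cancel, show a + 3 - 1 = a + 2 by omega, show a + 3 - 2 = a + 1 by omega]
    rw [← hb]; ring
  omega
end

section
/- For every integer n ≥ 3, the cardinality of F_n^+ equals (n² − 2n + 5)/4 if n is odd and (n² − 2n + 4)/4 if n is even. -/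
open Finset

def oddGapPairs (m : ℕ) : Finset (ℕ × ℕ) :=
  {p ∈ Icc 1 m ×ˢ Icc 1 m | p.1 < p.2 ∧ Odd (p.2 - p.1)}

lemma oddGapPairs_succ (m : ℕ) :
    oddGapPairs (m + 1) =
      oddGapPairs m ∪ (range ((m + 1) / 2)).image fun j => (m - 2 * j, m + 1) := by
  ext ⟨k, l⟩
  simp only [oddGapPairs, mem_union, mem_filter, mem_product, mem_Icc, mem_image, mem_range,
    Prod.mk.injEq, Nat.odd_iff]
  constructor
  · rintro ⟨⟨⟨hk1, hk2⟩, hl1, hl2⟩, hkl, hodd⟩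
    by_cases hlm : l ≤ m
    · exact Or.inl ⟨⟨⟨hk1, by omega⟩, hl1, hlm⟩, hkl, hodd⟩
    · exact Or.inr ⟨(m - k) / 2, by omega, by omega, by omega⟩
  · rintro (⟨⟨⟨hk1, hk2⟩, hl1, hl2⟩, hkl, hodd⟩ | ⟨j, hj, rfl, rfl⟩)
    · exact ⟨⟨⟨hk1, by omega⟩, hl1, by omega⟩, hkl, hodd⟩
    · exact ⟨⟨⟨by omega, by omega⟩, by omega, le_rfl⟩, by omega, by omega⟩

lemma card_oddGapPairs (m : ℕ) : 4 * #(oddGapPairs m) + m % 2 = m ^ 2 := by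
  induction m with
  | zero => rfl
  | succ m ih =>
    have hdisj : Disjoint (oddGapPairs m)
        ((range ((m + 1) / 2)).image fun j => (m - 2 * j, m + 1)) := by
      simp only [disjoint_left, oddGapPairs, mem_filter, mem_product, mem_Icc, mem_image]
      rintro _ ⟨⟨_, _, hl⟩, _⟩ ⟨j, _, rfl⟩
      omega
    have hinj : Set.InjOn (fun j => (m - 2 * j, m + 1)) ↑(range ((m + 1) / 2)) := by
      intro i hi j hj hij
      simp only [coe_range, Set.mem_Iio, Prod.mk.injEq] at hi hj hij
      omega
    rw [oddGapPairs_succ, card_union_of_disjoint hdisj, card_image_of_injOn hinj, card_range]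
    have hsq : (m + 1) ^ 2 = m ^ 2 + 2 * m + 1 := by ring
    omega

section yVec

variable {n k l : ℕ}

lemma yVec_apply_ne_zero_iff (hkl : k < l) (hln : l ≤ n) (i : Fin n) :
    yVec n k l i ≠ 0 ↔ ((i : ℕ) + 1 = k ∧ l < n) ∨ (i : ℕ) + 1 = l := by
  have hfib : (Nat.fib (l - k) : ℝ) ≠ 0 := by exact_mod_cast (Nat.fib_pos.2 (by omega)).ne'
  unfold yVec
  split_ifs with hik hil
  · simp [hfib, Nat.fib_eq_zero, hik]
    omega
  · have : (Nat.fib (n - k) : ℝ) ≠ 0 := by exact_mod_cast (Nat.fib_pos.2 (by omega)).ne'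
    simp [hfib, this, hil]
  · simp [hik, hil]

lemma yVec_top_s16 (hkn : k < n) :
    yVec n k n = fun i : Fin n => if (i : ℕ) + 1 = n then (1 : ℝ) else 0 := by
  have hfib : (Nat.fib (n - k) : ℝ) ≠ 0 := by exact_mod_cast (Nat.fib_pos.2 (by omega)).ne'
  funext i
  unfold yVec
  split_ifs <;> first | omega | simp [hfib]

lemma yVec_injOn :
    Set.InjOn (fun p : ℕ × ℕ => yVec n p.1 p.2) {p | 1 ≤ p.1 ∧ p.1 < p.2 ∧ p.2 < n} := by
  have hsupp {k l k' l' : ℕ} (hkl : k < l) (hln : l < n) (hkl' : k' < l') (hln' : l' < n)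
      (h : yVec n k l = yVec n k' l') (i : ℕ) (hi : i < n) (hik : i + 1 = k ∨ i + 1 = l) :
      i + 1 = k' ∨ i + 1 = l' := by
    have hne := (yVec_apply_ne_zero_iff hkl hln.le ⟨i, hi⟩).2 (by simp only; omega)
    rw [h, yVec_apply_ne_zero_iff hkl' hln'.le] at hne
    simp only at hne
    omega
  rintro ⟨k, l⟩ ⟨hk, hkl, hln⟩ ⟨k', l'⟩ ⟨hk', hkl', hln'⟩ h
  have hk_mem := hsupp hkl hln hkl' hln' h (k - 1) (by omega) (by omega)
  have hl_mem := hsupp hkl hln hkl' hln' h (l - 1) (by omega) (by omega)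
  have hk'_mem := hsupp hkl' hln' hkl hln h.symm (k' - 1) (by omega) (by omega)
  simp only [Prod.mk.injEq]
  omega

lemma yVec_ne_yVec_top {k' : ℕ} (hk : 1 ≤ k) (hkl : k < l) (hln : l < n) (hk'n : k' < n) :
    yVec n k l ≠ yVec n k' n := by
  intro h
  have hne := (yVec_apply_ne_zero_iff hkl hln.le ⟨k - 1, by omega⟩).2 (by simp only; omega)
  rw [h, yVec_apply_ne_zero_iff hk'n le_rfl] at hne
  simp only at hne
  omega

end yVec

lemma FplusSet_eq_insert {n : ℕ} (hn : 2 ≤ n) :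
    FplusSet n = insert (yVec n (n - 1) n)
      ((fun p : ℕ × ℕ => yVec n p.1 p.2) '' ↑(oddGapPairs (n - 1))) := by
  ext v
  simp only [FplusSet, oddGapPairs, Set.mem_ofPred_eq, Set.mem_insert_iff, Set.mem_image,
    coe_filter, mem_product, mem_Icc, Prod.exists]
  constructor
  · rintro ⟨k, l, hk, hkl, hln, hodd, rfl⟩
    rcases hln.lt_or_eq with hln | rfl
    · exact Or.inr ⟨k, l, ⟨⟨⟨hk, by omega⟩, by omega, by omega⟩, hkl, hodd⟩, rfl⟩
    · exact Or.inl ((yVec_top_s16 hkl).trans (yVec_top_s16 (by omega)).symm)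
  · rintro (rfl | ⟨k, l, ⟨⟨⟨hk, -⟩, -, hl⟩, hkl, hodd⟩, rfl⟩)
    · refine ⟨n - 1, n, by omega, by omega, le_rfl, ?_, rfl⟩
      rw [Nat.sub_sub_self (by omega)]
      exact odd_one
    · exact ⟨k, l, hk, hkl, by omega, hodd, rfl⟩

lemma ncard_FplusSet {n : ℕ} (hn : 2 ≤ n) :
    (FplusSet n).ncard = #(oddGapPairs (n - 1)) + 1 := by
  have hmem {p : ℕ × ℕ} (hp : p ∈ (oddGapPairs (n - 1) : Set (ℕ × ℕ))) :
      1 ≤ p.1 ∧ p.1 < p.2 ∧ p.2 < n := by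
    simp only [oddGapPairs, coe_filter, mem_product, mem_Icc, Set.mem_ofPred_eq] at hp
    omega
  have hnotMem :
      yVec n (n - 1) n ∉ (fun p : ℕ × ℕ => yVec n p.1 p.2) '' ↑(oddGapPairs (n - 1)) := by
    rintro ⟨p, hp, h⟩
    obtain ⟨hk, hkl, hln⟩ := hmem hp
    exact yVec_ne_yVec_top hk hkl hln (by omega) h
  rw [FplusSet_eq_insert hn, Set.ncard_insert_of_notMem hnotMem (Set.toFinite _),
    (yVec_injOn.mono fun _ => hmem).ncard_image, Set.ncard_coe_finset]

/-- For every integer n ≥ 3, #F_n^+ = (n² − 2n + 5)/4 if n is odd and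
(n² − 2n + 4)/4 if n is even. -/
theorem stmt16 (n : ℕ) (hn : 3 ≤ n) :
    (Odd n → 4 * (FplusSet n).ncard = n ^ 2 - 2 * n + 5)
    ∧ (Even n → 4 * (FplusSet n).ncard = n ^ 2 - 2 * n + 4) := by
  obtain ⟨m, rfl⟩ : ∃ m, n = m + 1 := ⟨n - 1, by omega⟩
  have hcount := card_oddGapPairs m
  have hsq : (m + 1) ^ 2 = m ^ 2 + 2 * m + 1 := by ring
  have hm : 2 ^ 2 ≤ m ^ 2 := Nat.pow_le_pow_left (by omega) 2
  rw [ncard_FplusSet (by omega), Nat.add_sub_cancel]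
  simp only [Nat.odd_iff, Nat.even_iff]
  omega
end

section
/- For every integer i ≥ 1 there exists a unique positive real number s such that max{f_{i+2}, φ f_{i+1}}^s = max{f_{i+1}, φ f_i}^s + max{f_i, φ f_{i-1}}^s; moreover, denoting this number by s_i, the sequence (s_i)_{i=1}^∞ is strictly decreasing, satisfies s_i > 1 for all i, and converges to 1 as i → ∞. -/
/-!
Since `φ f n - f (n + 1) = -ψ ^ n` alternates in sign, `fibMax (2m+1) = f (2m+1)` and
`fibMax (2m+2) = φ f (2m+1)`. Dividing by `fibMax (i+2)`, the equation becomes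
`u ^ s + v ^ s = 1` with `(u, v) = (φ ρₘ, ρₘ)` for `i = 2m+1` and `(φ⁻¹, ρₘ)` for `i = 2m+2`,
where `ρₘ = f (2m+1) / f (2m+3)` (`oddFibRatio m`). Here `u, v ∈ (0, 1)` and `u + v > 1`, so
`s ↦ u ^ s + v ^ s` is strictly decreasing and has a unique root `sᵢ`, which exceeds `1`.

For `sᵢ₊₁ < sᵢ` it suffices that the next pair gives a value `< 1` at `sᵢ ∈ (1, 2)`. From odd
`i` to `i + 1` only `u` decreases. From even `i` to `i + 1`, `u` grows from `φ⁻¹` to `φ ρₘ₊₁`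
while `v` shrinks from `ρₘ` to `ρₘ₊₁`; tangent-line bounds for `x ↦ x ^ t` reduce the comparison
to `φ² ρₘ₊₁ - 1 < ρₘ - ρₘ₊₁`, which follows from Catalan's identity
`f (2m+1) f (2m+5) = f (2m+3)² + 1`.

Finally `u + v ≤ 1 + φ⁻ⁱ` and `u, v ≤ φ / 2 < 1`, so
`u ^ t + v ^ t ≤ (1 + φ⁻ⁱ) (φ / 2) ^ (t - 1) < 1` for every fixed `t > 1` and large `i`;
hence `sᵢ → 1`.
-/

/-- fibMax i = max{f_i, φ f_{i-1}} with φ = (1+√5)/2. -/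
noncomputable def fibMax (i : ℕ) : ℝ :=
  max (Nat.fib i : ℝ) (((1 + Real.sqrt 5) / 2) * (Nat.fib (i - 1) : ℝ))

open Real Filter Set
open scoped goldenRatio

section RpowAddRpow

variable {u v : ℝ}

theorem strictAnti_rpow_add_rpow (hu : u ∈ Ioo 0 1) (hv : v ∈ Ioo 0 1) :
    StrictAnti fun t : ℝ => u ^ t + v ^ t := fun _ _ h =>
  add_lt_add (rpow_lt_rpow_of_exponent_gt hu.1 hu.2 h) (rpow_lt_rpow_of_exponent_gt hv.1 hv.2 h)

theorem lt_of_rpow_add_rpow_eq_one_of_one_lt {s t : ℝ} (hu : u ∈ Ioo 0 1) (hv : v ∈ Ioo 0 1)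
    (hs : u ^ s + v ^ s = 1) (ht : 1 < u ^ t + v ^ t) : t < s :=
  (strictAnti_rpow_add_rpow hu hv).lt_iff_gt.mp (hs ▸ ht)

theorem lt_of_rpow_add_rpow_eq_one_of_lt_one {s t : ℝ} (hu : u ∈ Ioo 0 1) (hv : v ∈ Ioo 0 1)
    (hs : u ^ s + v ^ s = 1) (ht : u ^ t + v ^ t < 1) : s < t :=
  (strictAnti_rpow_add_rpow hu hv).lt_iff_gt.mp (hs ▸ ht)

theorem exists_rpow_add_rpow_eq_one (hu : u ∈ Ioo 0 1) (hv : v ∈ Ioo 0 1) (huv : 1 < u + v) :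
    ∃ s : ℝ, u ^ s + v ^ s = 1 := by
  have hcont : Continuous fun t : ℝ => u ^ t + v ^ t :=
    (continuous_const.rpow continuous_id fun _ => Or.inl hu.1.ne').add
      (continuous_const.rpow continuous_id fun _ => Or.inl hv.1.ne')
  have hlim : Tendsto (fun t : ℝ => u ^ t + v ^ t) atTop (nhds 0) := by
    simpa using (tendsto_rpow_atTop_of_base_lt_one u (by linarith [hu.1]) hu.2).add
      (tendsto_rpow_atTop_of_base_lt_one v (by linarith [hv.1]) hv.2)
  obtain ⟨T, hT, hT1⟩ :=
    ((hlim.eventually (gt_mem_nhds one_pos)).and (eventually_ge_atTop 1)).exists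
  obtain ⟨s, -, hs⟩ := intermediate_value_Icc' hT1 hcont.continuousOn
    ⟨hT.le, by simpa only [rpow_one] using huv.le⟩
  exact ⟨s, hs⟩

theorem rpow_add_rpow_le_add_mul_rpow {c t : ℝ} (hu : 0 < u) (huc : u ≤ c) (hv : 0 < v)
    (hvc : v ≤ c) (ht : 1 ≤ t) : u ^ t + v ^ t ≤ (u + v) * c ^ (t - 1) := by
  have key {w : ℝ} (hw : 0 < w) (hwc : w ≤ c) : w ^ t ≤ w * c ^ (t - 1) := by
    calc w ^ t = w * w ^ (t - 1) := by rw [rpow_sub_one hw.ne']; field_simp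
      _ ≤ w * c ^ (t - 1) := by gcongr
  linarith [key hu huc, key hv hvc]

end RpowAddRpow

theorem rpow_add_mul_rpow_sub_one_mul_sub_le_rpow {y z t : ℝ} (hy : 0 < y) (hz : 0 ≤ z)
    (ht : 1 ≤ t) : y ^ t + t * y ^ (t - 1) * (z - y) ≤ z ^ t := by
  have hyt : 0 < y ^ t := rpow_pos_of_pos hy t
  have h := one_add_mul_self_le_rpow_one_add (s := z / y - 1)
    (by linarith [div_nonneg hz hy.le]) ht
  rw [add_sub_cancel, div_rpow hz hy.le, le_div_iff₀ hyt] at h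
  calc y ^ t + t * y ^ (t - 1) * (z - y) = (1 + t * (z / y - 1)) * y ^ t := by
        rw [rpow_sub_one hy.ne']; field_simp
    _ ≤ z ^ t := h

/-- Tangent lines of `x ↦ x ^ t` at `g * w'` and at `w'` bound the two differences; `t ≤ 2` enters
through `g ^ (t - 1) ≤ g`. -/
theorem rpow_mul_add_rpow_lt_inv_rpow_add_rpow {g w w' t : ℝ} (hg : 1 ≤ g) (hw' : 0 < w')
    (hgw' : 1 ≤ g ^ 2 * w') (hww' : g ^ 2 * w' - 1 < w - w') (ht₁ : 1 ≤ t) (ht₂ : t ≤ 2) :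
    (g * w') ^ t + w' ^ t < g⁻¹ ^ t + w ^ t := by
  have hg₀ : 0 < g := by linarith
  have hw : 0 ≤ w := by linarith
  have hgw'₀ : 0 < g * w' := by positivity
  have hgap : 0 ≤ g * w' - g⁻¹ := by
    rw [sub_nonneg, inv_le_iff_one_le_mul₀ hg₀]; linarith
  have hpow : (g * w') ^ (t - 1) * (g * w' - g⁻¹) ≤ w' ^ (t - 1) * (g ^ 2 * w' - 1) := by
    have hgt : g ^ (t - 1) ≤ g := by
      simpa using rpow_le_rpow_of_exponent_le hg (show t - 1 ≤ 1 by linarith)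
    rw [mul_rpow hg₀.le hw'.le]
    calc g ^ (t - 1) * w' ^ (t - 1) * (g * w' - g⁻¹)
        ≤ g * w' ^ (t - 1) * (g * w' - g⁻¹) := by gcongr
      _ = w' ^ (t - 1) * (g ^ 2 * w' - 1) := by field_simp
  suffices (g * w') ^ t - g⁻¹ ^ t < w ^ t - w' ^ t by linarith
  calc (g * w') ^ t - g⁻¹ ^ t
      ≤ t * ((g * w') ^ (t - 1) * (g * w' - g⁻¹)) := by
        linarith [rpow_add_mul_rpow_sub_one_mul_sub_le_rpow hgw'₀ (inv_pos.2 hg₀).le ht₁]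
    _ ≤ t * (w' ^ (t - 1) * (g ^ 2 * w' - 1)) := by gcongr
    _ < t * (w' ^ (t - 1) * (w - w')) := by gcongr
    _ ≤ w ^ t - w' ^ t := by linarith [rpow_add_mul_rpow_sub_one_mul_sub_le_rpow hw' hw ht₁]

theorem Nat.exists_eq_two_mul_add_one_or_eq_two_mul_add_two {i : ℕ} (hi : 1 ≤ i) :
    ∃ m, i = 2 * m + 1 ∨ i = 2 * m + 2 := by
  obtain ⟨m, hm | hm⟩ := Nat.even_or_odd' (i - 1) <;> exact ⟨m, by omega⟩

theorem inv_goldenRatio_eq_sub_one : φ⁻¹ = φ - 1 := by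
  rw [inv_goldenRatio, ← one_sub_goldenConj]; ring

theorem goldenRatio_mul_add_self (x : ℝ) : φ * x + x = φ ^ 2 * x := by
  rw [goldenRatio_sq]; ring

theorem goldenRatio_sq_mul_fib (n : ℕ) : φ ^ 2 * Nat.fib n = Nat.fib (n + 2) - ψ ^ n := by
  have h₁ := fib_succ_sub_goldenRatio_mul_fib n
  have h₂ := fib_succ_sub_goldenRatio_mul_fib (n + 1)
  linear_combination -h₂ - φ * h₁ - ψ ^ n * goldenRatio_add_goldenConj

theorem goldenRatio_sq_mul_fib_of_odd {n : ℕ} (hn : Odd n) :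
    φ ^ 2 * Nat.fib n = Nat.fib (n + 2) + φ⁻¹ ^ n := by
  rw [goldenRatio_sq_mul_fib, inv_goldenRatio, hn.neg_pow, sub_eq_add_neg]

theorem fib_lt_goldenRatio_pow (n : ℕ) : (Nat.fib n : ℝ) < φ ^ n := by
  cases n with
  | zero => simp
  | succ n =>
    have h := fib_succ_sub_goldenConj_mul_fib n
    have : ψ * Nat.fib n ≤ 0 :=
      mul_nonpos_of_nonpos_of_nonneg goldenConj_neg.le (Nat.cast_nonneg _)
    calc (Nat.fib (n + 1) : ℝ) ≤ φ ^ n := by linarith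
      _ < φ ^ (n + 1) := pow_lt_pow_right₀ one_lt_goldenRatio n.lt_succ_self

theorem fib_mul_fib_add_four_of_odd {n : ℕ} (hn : Odd n) :
    (Nat.fib n : ℝ) * Nat.fib (n + 4) = Nat.fib (n + 2) ^ 2 + 1 := by
  have h := Int.fib_add_sq_sub_fib_mul_fib_add_two_mul n 2
  simp only [show (n : ℤ) + 2 = (n + 2 : ℕ) by push_cast; ring,
    show (n : ℤ) + 2 * 2 = (n + 4 : ℕ) by push_cast; ring, Int.fib_natCast, Int.natAbs_natCast,
    hn.neg_one_pow, Int.fib_two] at h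
  exact_mod_cast (by linarith : (Nat.fib n : ℤ) * Nat.fib (n + 4) = Nat.fib (n + 2) ^ 2 + 1)

theorem cast_fib_pos {n : ℕ} (hn : n ≠ 0) : (0 : ℝ) < Nat.fib n := by
  exact_mod_cast Nat.fib_pos.2 (Nat.pos_of_ne_zero hn)

theorem fibMax_eq (n : ℕ) : fibMax n = max (Nat.fib n : ℝ) (φ * Nat.fib (n - 1)) := rfl

theorem fibMax_two_mul_add_one (m : ℕ) : fibMax (2 * m + 1) = Nat.fib (2 * m + 1) := by
  have h := fib_succ_sub_goldenRatio_mul_fib (2 * m)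
  have : 0 ≤ ψ ^ (2 * m) := (even_two_mul m).pow_nonneg ψ
  rw [fibMax_eq, Nat.add_sub_cancel, max_eq_left (by linarith)]

theorem fibMax_two_mul_add_two (m : ℕ) : fibMax (2 * m + 2) = φ * Nat.fib (2 * m + 1) := by
  have h := fib_succ_sub_goldenRatio_mul_fib (2 * m + 1)
  have : ψ ^ (2 * m + 1) < 0 := (odd_two_mul_add_one m).pow_neg goldenConj_neg
  rw [fibMax_eq, show 2 * m + 2 - 1 = 2 * m + 1 by omega, max_eq_right (by linarith)]

theorem fibMax_nonneg (n : ℕ) : 0 ≤ fibMax n :=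
  le_max_of_le_left (Nat.cast_nonneg _)

theorem fibMax_pos {n : ℕ} (hn : n ≠ 0) : 0 < fibMax n :=
  lt_max_of_lt_left (cast_fib_pos hn)

noncomputable def oddFibRatio (m : ℕ) : ℝ := Nat.fib (2 * m + 1) / Nat.fib (2 * m + 3)

theorem oddFibRatio_pos (m : ℕ) : 0 < oddFibRatio m :=
  div_pos (cast_fib_pos (n := 2 * m + 1) (by omega)) (cast_fib_pos (n := 2 * m + 3) (by omega))

theorem oddFibRatio_le_half (m : ℕ) : oddFibRatio m ≤ 1 / 2 := by
  have h : (Nat.fib (2 * m + 3) : ℝ) = Nat.fib (2 * m + 1) + Nat.fib (2 * m + 2) := by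
    exact_mod_cast Nat.fib_add_two
  have hle : (Nat.fib (2 * m + 1) : ℝ) ≤ Nat.fib (2 * m + 2) := by
    exact_mod_cast Nat.fib_le_fib_succ
  rw [oddFibRatio, div_le_iff₀ (cast_fib_pos (n := 2 * m + 3) (by omega))]
  linarith

theorem goldenRatio_sq_mul_oddFibRatio (m : ℕ) :
    φ ^ 2 * oddFibRatio m = 1 + φ⁻¹ ^ (2 * m + 1) / Nat.fib (2 * m + 3) := by
  have h := goldenRatio_sq_mul_fib_of_odd (odd_two_mul_add_one m)
  have hf := cast_fib_pos (n := 2 * m + 3) (by omega)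
  rw [oddFibRatio, ← mul_div_assoc, h]
  field_simp

theorem one_lt_goldenRatio_sq_mul_oddFibRatio (m : ℕ) : 1 < φ ^ 2 * oddFibRatio m := by
  rw [goldenRatio_sq_mul_oddFibRatio, lt_add_iff_pos_right]
  exact div_pos (pow_pos (inv_pos.2 goldenRatio_pos) _) (cast_fib_pos (by omega))

theorem goldenRatio_sq_mul_oddFibRatio_le (m : ℕ) :
    φ ^ 2 * oddFibRatio m ≤ 1 + φ⁻¹ ^ (2 * m + 1) := by
  have h₁ : (1 : ℝ) ≤ Nat.fib (2 * m + 3) := by exact_mod_cast Nat.fib_pos.2 (Nat.succ_pos _)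
  rw [goldenRatio_sq_mul_oddFibRatio, add_le_add_iff_left]
  exact div_le_self (by positivity) h₁

/-- With `a = f (2m+3)`, the left side is `φ⁻¹ ^ (2m+3) / f (2m+5)` while Catalan's identity makes
the right side `1 / (a f (2m+5))`; the claim reduces to `a < φ ^ (2m+3)`. -/
theorem goldenRatio_sq_mul_oddFibRatio_succ_sub_one_lt (m : ℕ) :
    φ ^ 2 * oddFibRatio (m + 1) - 1 < oddFibRatio m - oddFibRatio (m + 1) := by
  have hcat : (Nat.fib (2 * m + 1) : ℝ) * Nat.fib (2 * m + 5) = Nat.fib (2 * m + 3) ^ 2 + 1 :=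
    fib_mul_fib_add_four_of_odd (odd_two_mul_add_one m)
  have hsmall : Nat.fib (2 * m + 3) * φ⁻¹ ^ (2 * m + 3) < 1 := by
    calc Nat.fib (2 * m + 3) * φ⁻¹ ^ (2 * m + 3)
        < φ ^ (2 * m + 3) * φ⁻¹ ^ (2 * m + 3) := by gcongr; exact fib_lt_goldenRatio_pow _
      _ = 1 := by rw [← mul_pow, mul_inv_cancel₀ goldenRatio_ne_zero, one_pow]
  have ha := cast_fib_pos (n := 2 * m + 3) (by omega)
  have hb := cast_fib_pos (n := 2 * m + 5) (by omega)
  rw [goldenRatio_sq_mul_oddFibRatio, add_sub_cancel_left]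
  simp only [oddFibRatio, show 2 * (m + 1) + 1 = 2 * m + 3 by ring,
    show 2 * (m + 1) + 3 = 2 * m + 5 by ring]
  rw [div_sub_div _ _ ha.ne' hb.ne', hcat, div_lt_div_iff₀ hb (by positivity)]
  nlinarith

noncomputable def fibMaxRatioSucc (i : ℕ) : ℝ := fibMax (i + 1) / fibMax (i + 2)

noncomputable def fibMaxRatio (i : ℕ) : ℝ := fibMax i / fibMax (i + 2)

theorem fibMax_rpow_eq_iff (i : ℕ) (s : ℝ) :
    fibMax (i + 2) ^ s = fibMax (i + 1) ^ s + fibMax i ^ s ↔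
      fibMaxRatioSucc i ^ s + fibMaxRatio i ^ s = 1 := by
  have hpos : 0 < fibMax (i + 2) ^ s := rpow_pos_of_pos (fibMax_pos (by omega)) s
  rw [fibMaxRatioSucc, fibMaxRatio, div_rpow (fibMax_nonneg _) (fibMax_nonneg _),
    div_rpow (fibMax_nonneg _) (fibMax_nonneg _), ← add_div, div_eq_one_iff_eq hpos.ne', eq_comm]

theorem fibMaxRatioSucc_two_mul_add_one (m : ℕ) :
    fibMaxRatioSucc (2 * m + 1) = φ * oddFibRatio m := by
  rw [fibMaxRatioSucc, show 2 * m + 1 + 2 = 2 * (m + 1) + 1 by ring, fibMax_two_mul_add_one,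
    fibMax_two_mul_add_two, oddFibRatio, mul_div_assoc]
  rfl

theorem fibMaxRatio_two_mul_add_one (m : ℕ) : fibMaxRatio (2 * m + 1) = oddFibRatio m := by
  rw [fibMaxRatio, show 2 * m + 1 + 2 = 2 * (m + 1) + 1 by ring, fibMax_two_mul_add_one,
    fibMax_two_mul_add_one, oddFibRatio]
  rfl

theorem fibMaxRatioSucc_two_mul_add_two (m : ℕ) : fibMaxRatioSucc (2 * m + 2) = φ⁻¹ := by
  have h := cast_fib_pos (n := 2 * m + 3) (by omega)
  rw [fibMaxRatioSucc, show 2 * m + 2 + 1 = 2 * (m + 1) + 1 by ring,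
    show 2 * m + 2 + 2 = 2 * (m + 1) + 2 by ring, fibMax_two_mul_add_one, fibMax_two_mul_add_two]
  field_simp

theorem fibMaxRatio_two_mul_add_two (m : ℕ) : fibMaxRatio (2 * m + 2) = oddFibRatio m := by
  rw [fibMaxRatio, show 2 * m + 2 + 2 = 2 * (m + 1) + 2 by ring, fibMax_two_mul_add_two,
    fibMax_two_mul_add_two, mul_div_mul_left _ _ goldenRatio_ne_zero, oddFibRatio]
  rfl

theorem fibMaxRatioSucc_mem_Ioc {i : ℕ} (hi : 1 ≤ i) :
    fibMaxRatioSucc i ∈ Ioc 0 (φ / 2) := by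
  obtain ⟨m, rfl | rfl⟩ := Nat.exists_eq_two_mul_add_one_or_eq_two_mul_add_two hi
  · rw [fibMaxRatioSucc_two_mul_add_one]
    have := oddFibRatio_le_half m
    exact ⟨mul_pos goldenRatio_pos (oddFibRatio_pos m), by nlinarith [goldenRatio_pos]⟩
  · rw [fibMaxRatioSucc_two_mul_add_two, inv_goldenRatio_eq_sub_one]
    constructor <;> linarith [one_lt_goldenRatio, goldenRatio_lt_two]

theorem fibMaxRatio_mem_Ioc {i : ℕ} (hi : 1 ≤ i) : fibMaxRatio i ∈ Ioc 0 (1 / 2) := by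
  obtain ⟨m, rfl | rfl⟩ := Nat.exists_eq_two_mul_add_one_or_eq_two_mul_add_two hi
  · rw [fibMaxRatio_two_mul_add_one]; exact ⟨oddFibRatio_pos m, oddFibRatio_le_half m⟩
  · rw [fibMaxRatio_two_mul_add_two]; exact ⟨oddFibRatio_pos m, oddFibRatio_le_half m⟩

theorem fibMaxRatioSucc_mem_Ioo {i : ℕ} (hi : 1 ≤ i) : fibMaxRatioSucc i ∈ Ioo 0 1 :=
  have h := fibMaxRatioSucc_mem_Ioc hi
  ⟨h.1, h.2.trans_lt (by linarith [goldenRatio_lt_two])⟩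

theorem fibMaxRatio_mem_Ioo {i : ℕ} (hi : 1 ≤ i) : fibMaxRatio i ∈ Ioo 0 1 :=
  have h := fibMaxRatio_mem_Ioc hi
  ⟨h.1, h.2.trans_lt (by norm_num)⟩

theorem one_lt_fibMaxRatioSucc_add_fibMaxRatio {i : ℕ} (hi : 1 ≤ i) :
    1 < fibMaxRatioSucc i + fibMaxRatio i := by
  obtain ⟨m, rfl | rfl⟩ := Nat.exists_eq_two_mul_add_one_or_eq_two_mul_add_two hi
  · rw [fibMaxRatioSucc_two_mul_add_one, fibMaxRatio_two_mul_add_one, goldenRatio_mul_add_self]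
    exact one_lt_goldenRatio_sq_mul_oddFibRatio m
  · rw [fibMaxRatioSucc_two_mul_add_two, fibMaxRatio_two_mul_add_two, inv_goldenRatio_eq_sub_one]
    nlinarith [one_lt_goldenRatio_sq_mul_oddFibRatio m, goldenRatio_sq, oddFibRatio_pos m]

theorem fibMaxRatioSucc_add_fibMaxRatio_le {i : ℕ} (hi : 1 ≤ i) :
    fibMaxRatioSucc i + fibMaxRatio i ≤ 1 + φ⁻¹ ^ i := by
  obtain ⟨m, rfl | rfl⟩ := Nat.exists_eq_two_mul_add_one_or_eq_two_mul_add_two hi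
  · rw [fibMaxRatioSucc_two_mul_add_one, fibMaxRatio_two_mul_add_one, goldenRatio_mul_add_self]
    exact goldenRatio_sq_mul_oddFibRatio_le m
  · rw [fibMaxRatioSucc_two_mul_add_two, fibMaxRatio_two_mul_add_two]
    have hq : φ⁻¹ + φ⁻¹ ^ 2 = 1 := by
      rw [inv_goldenRatio_eq_sub_one]; linear_combination goldenRatio_sq
    have hρ : oddFibRatio m ≤ φ⁻¹ ^ 2 + φ⁻¹ ^ (2 * m + 3) := by
      calc oddFibRatio m = φ⁻¹ ^ 2 * (φ ^ 2 * oddFibRatio m) := by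
            rw [← mul_assoc, ← mul_pow, inv_mul_cancel₀ goldenRatio_ne_zero, one_pow, one_mul]
        _ ≤ φ⁻¹ ^ 2 * (1 + φ⁻¹ ^ (2 * m + 1)) := by
            gcongr; exact goldenRatio_sq_mul_oddFibRatio_le m
        _ = φ⁻¹ ^ 2 + φ⁻¹ ^ (2 * m + 3) := by ring
    have : φ⁻¹ ^ (2 * m + 3) ≤ φ⁻¹ ^ (2 * m + 2) :=
      pow_le_pow_of_le_one (by positivity) (inv_le_one_of_one_le₀ one_lt_goldenRatio.le)
        (by omega)
    linarith

theorem fibMaxRatioSucc_rpow_two_add_lt_one {i : ℕ} (hi : 1 ≤ i) :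
    fibMaxRatioSucc i ^ (2 : ℝ) + fibMaxRatio i ^ (2 : ℝ) < 1 := by
  rw [rpow_two, rpow_two]
  obtain ⟨m, rfl | rfl⟩ := Nat.exists_eq_two_mul_add_one_or_eq_two_mul_add_two hi
  · rw [fibMaxRatioSucc_two_mul_add_one, fibMaxRatio_two_mul_add_one, mul_pow, goldenRatio_sq]
    have hρ : oddFibRatio m ^ 2 ≤ 1 / 4 := by
      nlinarith [oddFibRatio_pos m, oddFibRatio_le_half m]
    nlinarith [mul_le_mul_of_nonneg_left hρ (by linarith [goldenRatio_pos] : (0 : ℝ) ≤ φ + 2),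
      goldenRatio_lt_two]
  · rw [fibMaxRatioSucc_two_mul_add_two, fibMaxRatio_two_mul_add_two, inv_goldenRatio_eq_sub_one]
    nlinarith [oddFibRatio_pos m, oddFibRatio_le_half m, goldenRatio_sq, one_lt_goldenRatio]

theorem fibMaxRatio_rpow_succ_lt {i : ℕ} (hi : 1 ≤ i) {t : ℝ} (ht₁ : 1 ≤ t)
    (ht₂ : t ≤ 2) :
    fibMaxRatioSucc (i + 1) ^ t + fibMaxRatio (i + 1) ^ t <
      fibMaxRatioSucc i ^ t + fibMaxRatio i ^ t := by
  obtain ⟨m, rfl | rfl⟩ := Nat.exists_eq_two_mul_add_one_or_eq_two_mul_add_two hi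
  · rw [fibMaxRatioSucc_two_mul_add_one, fibMaxRatio_two_mul_add_one,
      fibMaxRatioSucc_two_mul_add_two, fibMaxRatio_two_mul_add_two, add_lt_add_iff_right]
    have h : φ⁻¹ < φ * oddFibRatio m := by
      rw [inv_lt_iff_one_lt_mul₀' goldenRatio_pos, ← mul_assoc, ← sq]
      exact one_lt_goldenRatio_sq_mul_oddFibRatio m
    exact rpow_lt_rpow (inv_pos.2 goldenRatio_pos).le h (by linarith)
  · rw [show 2 * m + 2 + 1 = 2 * (m + 1) + 1 by ring, fibMaxRatioSucc_two_mul_add_one,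
      fibMaxRatio_two_mul_add_one, fibMaxRatioSucc_two_mul_add_two, fibMaxRatio_two_mul_add_two]
    exact rpow_mul_add_rpow_lt_inv_rpow_add_rpow one_lt_goldenRatio.le (oddFibRatio_pos _)
      (one_lt_goldenRatio_sq_mul_oddFibRatio _).le
      (goldenRatio_sq_mul_oddFibRatio_succ_sub_one_lt m) ht₁ ht₂

theorem eventually_fibMaxRatio_rpow_add_lt_one {t : ℝ} (ht : 1 < t) :
    ∀ᶠ i in atTop, fibMaxRatioSucc i ^ t + fibMaxRatio i ^ t < 1 := by
  have hc : (φ / 2) ^ (t - 1) < 1 :=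
    rpow_lt_one (by positivity) (by linarith [goldenRatio_lt_two]) (by linarith)
  have hlim : Tendsto (fun i : ℕ => (1 + φ⁻¹ ^ i) * (φ / 2) ^ (t - 1)) atTop
      (nhds ((φ / 2) ^ (t - 1))) := by
    simpa using ((tendsto_pow_atTop_nhds_zero_of_lt_one (inv_nonneg.2 goldenRatio_pos.le)
      (inv_lt_one_of_one_lt₀ one_lt_goldenRatio)).const_add 1).mul_const ((φ / 2) ^ (t - 1))
  filter_upwards [hlim.eventually (gt_mem_nhds hc), eventually_ge_atTop 1] with i hlt hi
  have hu := fibMaxRatioSucc_mem_Ioc hi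
  have hv := fibMaxRatio_mem_Ioc hi
  calc fibMaxRatioSucc i ^ t + fibMaxRatio i ^ t
      ≤ (fibMaxRatioSucc i + fibMaxRatio i) * (φ / 2) ^ (t - 1) :=
        rpow_add_rpow_le_add_mul_rpow hu.1 hu.2 hv.1
          (hv.2.trans (by linarith [one_lt_goldenRatio])) ht.le
    _ ≤ (1 + φ⁻¹ ^ i) * (φ / 2) ^ (t - 1) :=
        mul_le_mul_of_nonneg_right (fibMaxRatioSucc_add_fibMaxRatio_le hi) (by positivity)
    _ < 1 := hlt

theorem one_lt_of_fibMaxRatio_rpow_add_eq_one {i : ℕ} (hi : 1 ≤ i) {s : ℝ}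
    (hs : fibMaxRatioSucc i ^ s + fibMaxRatio i ^ s = 1) : 1 < s :=
  lt_of_rpow_add_rpow_eq_one_of_one_lt (fibMaxRatioSucc_mem_Ioo hi) (fibMaxRatio_mem_Ioo hi) hs
    (by simpa only [rpow_one] using one_lt_fibMaxRatioSucc_add_fibMaxRatio hi)

theorem lt_of_fibMaxRatio_rpow_add_eq_one_of_lt_one {i : ℕ} (hi : 1 ≤ i) {s t : ℝ}
    (hs : fibMaxRatioSucc i ^ s + fibMaxRatio i ^ s = 1)
    (ht : fibMaxRatioSucc i ^ t + fibMaxRatio i ^ t < 1) : s < t :=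
  lt_of_rpow_add_rpow_eq_one_of_lt_one (fibMaxRatioSucc_mem_Ioo hi) (fibMaxRatio_mem_Ioo hi) hs ht

theorem existsUnique_fibMaxRatio_rpow_add_eq_one {i : ℕ} (hi : 1 ≤ i) :
    ∃! s : ℝ, fibMaxRatioSucc i ^ s + fibMaxRatio i ^ s = 1 := by
  have hu := fibMaxRatioSucc_mem_Ioo hi
  have hv := fibMaxRatio_mem_Ioo hi
  obtain ⟨s, hs⟩ :=
    exists_rpow_add_rpow_eq_one hu hv (one_lt_fibMaxRatioSucc_add_fibMaxRatio hi)
  exact ⟨s, hs, fun s' hs' => (strictAnti_rpow_add_rpow hu hv).injective (hs'.trans hs.symm)⟩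

theorem lt_of_fibMaxRatio_rpow_add_eq_one_succ {i : ℕ} (hi : 1 ≤ i) {s s' : ℝ}
    (hs : fibMaxRatioSucc i ^ s + fibMaxRatio i ^ s = 1)
    (hs' : fibMaxRatioSucc (i + 1) ^ s' + fibMaxRatio (i + 1) ^ s' = 1) : s' < s := by
  have hs₂ : s < 2 :=
    lt_of_fibMaxRatio_rpow_add_eq_one_of_lt_one hi hs (fibMaxRatioSucc_rpow_two_add_lt_one hi)
  have hs₁ : 1 < s := one_lt_of_fibMaxRatio_rpow_add_eq_one hi hs
  exact lt_of_fibMaxRatio_rpow_add_eq_one_of_lt_one (by omega) hs'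
    ((fibMaxRatio_rpow_succ_lt hi hs₁.le hs₂.le).trans_eq hs)

/-- For every integer i ≥ 1 there exists a unique positive real s with
max{f_{i+2}, φ f_{i+1}}^s = max{f_{i+1}, φ f_i}^s + max{f_i, φ f_{i-1}}^s; and for any
choice s_i of these numbers, the sequence (s_i)_{i ≥ 1} is strictly decreasing,
satisfies s_i > 1 for all i ≥ 1, and converges to 1 as i → ∞. -/
theorem stmt18 :
    (∀ i : ℕ, 1 ≤ i → ∃! s : ℝ, 0 < s ∧
      fibMax (i + 2) ^ s = fibMax (i + 1) ^ s + fibMax i ^ s)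
    ∧ ∀ s : ℕ → ℝ,
        (∀ i : ℕ, 1 ≤ i → 0 < s i ∧
          fibMax (i + 2) ^ (s i) = fibMax (i + 1) ^ (s i) + fibMax i ^ (s i)) →
        ((∀ i j : ℕ, 1 ≤ i → i < j → s j < s i)
          ∧ (∀ i : ℕ, 1 ≤ i → 1 < s i)
          ∧ Filter.Tendsto s Filter.atTop (nhds 1)) := by
  refine ⟨fun i hi => ?_, fun s hs => ?_⟩
  · simp only [fibMax_rpow_eq_iff]
    obtain ⟨s, hs, huniq⟩ := existsUnique_fibMaxRatio_rpow_add_eq_one hi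
    exact ⟨s, ⟨one_pos.trans (one_lt_of_fibMaxRatio_rpow_add_eq_one hi hs), hs⟩,
      fun s' hs' => huniq s' hs'.2⟩
  have hroot (i : ℕ) (hi : 1 ≤ i) : fibMaxRatioSucc i ^ s i + fibMaxRatio i ^ s i = 1 :=
    (fibMax_rpow_eq_iff i (s i)).1 (hs i hi).2
  have one_lt (i : ℕ) (hi : 1 ≤ i) : 1 < s i :=
    one_lt_of_fibMaxRatio_rpow_add_eq_one hi (hroot i hi)
  refine ⟨fun i j hi hij => ?_, one_lt, ?_⟩
  · refine strictAntiOn_of_succ_lt ordConnected_Ici (fun k _ hk _ => ?_)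
      (mem_Ici.2 hi) (mem_Ici.2 (hi.trans hij.le)) hij
    exact lt_of_fibMaxRatio_rpow_add_eq_one_succ hk (hroot k hk) (hroot (k + 1) (by omega))
  · refine tendsto_order.2 ⟨fun a ha => ?_, fun b hb => ?_⟩
    · filter_upwards [eventually_ge_atTop 1] with i hi
      exact ha.trans (one_lt i hi)
    · filter_upwards [eventually_fibMaxRatio_rpow_add_lt_one hb, eventually_ge_atTop 1] with i h hi
      exact lt_of_fibMaxRatio_rpow_add_eq_one_of_lt_one hi (hroot i hi) h
end
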